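/- arXiv:2004.00518 — 10 statements merged into one kernel-verified Lean document; each statement's English description precedes it below -/
import Mathlib

section
/- For every valid schedule (preemptive, with migration allowed) with job completion times C_j, there exists a feasible solution of the linear program (LP1) whose completion-time values C̃_j satisfy C̃_j ≤ C_j for every job j. Consequently, the optimal value of (LP1) is at most OPT, the minimum of Σ_j w_j C_j over all valid schedules. -/
open Finset MeasureTheory
open scoped Classical

/-- For every valid schedule (preemptive, with migration allowed) there exists a feasible
solution of (LP1) whose completion-time values `C̃_j` satisfy `C̃_j ≤ C_j` for every job. -/
theorem lp1_lower_bounds_opt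
    (M N : ℕ) (Task : Type) [Fintype Task]
    (job : Task → Fin N)
    (cap : Fin M → ℝ) (hcap : ∀ i, 0 < cap i)
    (w : Fin N → ℝ) (hw : ∀ j, 0 < w j)
    (a : Task → ℝ) (ha : ∀ k, 0 < a k)
    (place : Task → Finset (Fin M)) (hplace : ∀ k, (place k).Nonempty)
    (p : Task → Fin M → ℕ) (hp : ∀ k, ∀ i ∈ place k, 1 ≤ p k i)
    (T : ℕ)
    (hT : T = Finset.univ.sup fun i => ∑ k ∈ Finset.univ.filter (fun k => i ∈ place k), p k i)
    -- a valid schedule over time slots 1,…,T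
    (X : Task → Fin M → ℕ → ℝ)
    (hX01 : ∀ k i t, X k i t = 0 ∨ X k i t = 1)
    (hXdom : ∀ k i t, X k i t = 1 → 1 ≤ t ∧ t ≤ T)
    (hpack : ∀ i t, ∑ k, a k * X k i t ≤ cap i)
    (hone : ∀ k t, ∑ i, X k i t ≤ 1)
    (hplc : ∀ k i t, i ∉ place k → X k i t = 0)
    (hproc : ∀ k, ∑ i ∈ place k, ∑ t ∈ Finset.Icc 1 T, X k i t / (p k i : ℝ) = 1)
    -- job completion times
    (C : Fin N → ℕ)
    (hC : ∀ j, C j = Finset.sup (Finset.univ.filter fun k => job k = j)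
      (fun k => Finset.sup ((Finset.Icc 1 T).filter fun t => ∃ i, X k i t = 1) id))
    -- (LP1) parameters: ε > 0 and L smallest with (1+ε)^L ≥ T
    (ε : ℝ) (hε : 0 < ε)
    (L : ℕ) (hLub : (T : ℝ) ≤ (1 + ε) ^ L)
    (hLmin : ∀ L' : ℕ, (T : ℝ) ≤ (1 + ε) ^ L' → L ≤ L') :
    ∃ (z : Task → Fin M → ℕ → ℝ) (x : Fin N → ℕ → ℝ),
      (∀ k i l, 0 ≤ z k i l) ∧
      (∀ k i l, i ∉ place k → z k i l = 0) ∧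
      (∀ j l, 0 ≤ x j l) ∧
      (∀ k, ∑ l ∈ Finset.range (L + 1), ∑ i ∈ place k, z k i l = 1) ∧
      (∀ k, ∀ l ≤ L, ∑ l' ∈ Finset.range (l + 1), ∑ i ∈ place k,
          z k i l' * (p k i : ℝ) ≤ (1 + ε) ^ l) ∧
      (∀ i, ∀ l ≤ L, ∑ l' ∈ Finset.range (l + 1),
          ∑ k ∈ Finset.univ.filter (fun k => i ∈ place k),
            z k i l' * (p k i : ℝ) * a k ≤ cap i * (1 + ε) ^ l) ∧
      (∀ (j : Fin N) (k : Task), job k = j → ∀ l ≤ L,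
          ∑ l' ∈ Finset.range (l + 1), x j l' ≤
            ∑ l' ∈ Finset.range (l + 1), ∑ i ∈ place k, z k i l') ∧
      (∀ j, ∑ l ∈ Finset.range (L + 1), x j l = 1) ∧
      (∀ j, ∑ l ∈ Finset.range (L + 1),
          (if l = 0 then (0 : ℝ) else (1 + ε) ^ (l - 1)) * x j l ≤ (C j : ℝ)) := by

  classical
  have h1e : (1:ℝ) < 1 + ε := by linarith
  have hXnn : ∀ k i t, 0 ≤ X k i t := by
    intro k i t; rcases hX01 k i t with h | h <;> simp [h]
  have hex : ∀ n : ℕ, ∃ l : ℕ, (n:ℝ) ≤ (1+ε)^l := by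
    intro n
    obtain ⟨l, hl⟩ := pow_unbounded_of_one_lt (n:ℝ) h1e
    exact ⟨l, hl.le⟩
  set lvl : ℕ → ℕ := fun n => Nat.find (hex n) with hlvl_def
  have hlvl_spec : ∀ n : ℕ, (n:ℝ) ≤ (1+ε) ^ lvl n := fun n => Nat.find_spec (hex n)
  have hlvl_min : ∀ (n m : ℕ), (n:ℝ) ≤ (1+ε)^m → lvl n ≤ m := fun n m h => Nat.find_min' (hex n) h
  have hlvl_lt : ∀ n m, m < lvl n → (1+ε)^m < (n:ℝ) :=
    fun n m h => lt_of_not_ge (Nat.find_min (hex n) h)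
  have hpow_mono : ∀ {m l : ℕ}, m ≤ l → (1+ε)^m ≤ (1+ε)^l :=
    fun h => pow_le_pow_right₀ h1e.le h
  have hlvlT : ∀ t ∈ Finset.Icc 1 T, lvl t ≤ L := by
    intro t ht
    rw [Finset.mem_Icc] at ht
    exact hlvl_min t L (le_trans (by exact_mod_cast ht.2) hLub)
  set z : Task → Fin M → ℕ → ℝ := fun k i l =>
    if i ∈ place k then
      ∑ t ∈ (Finset.Icc 1 T).filter (fun t => lvl t = l), X k i t / (p k i : ℝ)
    else 0 with hz_def
  set x : Fin N → ℕ → ℝ := fun j l => if l = lvl (C j) then 1 else 0 with hx_def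
  have hz_eq : ∀ k, ∀ i ∈ place k, ∀ l,
      z k i l = ∑ t ∈ (Finset.Icc 1 T).filter (fun t => lvl t = l), X k i t / (p k i : ℝ) := by
    intro k i hi l; simp only [hz_def, if_pos hi]
  have hznn : ∀ k i l, 0 ≤ z k i l := by
    intro k i l
    simp only [hz_def]
    split
    · exact Finset.sum_nonneg fun t _ => div_nonneg (hXnn k i t) (Nat.cast_nonneg _)
    · exact le_refl 0
  have hpne : ∀ k, ∀ i ∈ place k, ((p k i : ℝ) ≠ 0) := by
    intro k i hi
    exact_mod_cast Nat.one_le_iff_ne_zero.mp (hp k i hi)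
  -- partition lemma
  have haux : ∀ (f : ℕ → ℝ) (l : ℕ),
      ∑ l' ∈ Finset.range (l+1), ∑ t ∈ (Finset.Icc 1 T).filter (fun t => lvl t = l'), f t
        = ∑ t ∈ (Finset.Icc 1 T).filter (fun t => lvl t ≤ l), f t := by
    intro f l
    rw [← Finset.sum_fiberwise_of_maps_to (g := lvl) (t := Finset.range (l+1))
      (fun t ht => Finset.mem_range.mpr (Nat.lt_succ_of_le (Finset.mem_filter.mp ht).2)) f]
    refine Finset.sum_congr rfl fun l' hl' => ?_
    have hl'l : l' ≤ l := Nat.lt_succ_iff.mp (Finset.mem_range.mp hl')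
    rw [Finset.filter_filter]
    refine Finset.sum_congr (Finset.filter_congr fun t _ => ?_) fun _ _ => rfl
    show lvl t = l' ↔ lvl t ≤ l ∧ lvl t = l'
    exact ⟨fun h => ⟨le_of_eq_of_le h hl'l, h⟩, fun h => h.2⟩
  have hcard : ∀ l : ℕ,
      (((Finset.Icc 1 T).filter (fun t => lvl t ≤ l)).card : ℝ) ≤ (1+ε)^l := by
    intro l
    have hsub : (Finset.Icc 1 T).filter (fun t => lvl t ≤ l)
        ⊆ Finset.Icc 1 (Nat.floor ((1+ε)^l)) := by
      intro t ht
      rw [Finset.mem_filter, Finset.mem_Icc] at ht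
      rw [Finset.mem_Icc]
      exact ⟨ht.1.1, Nat.le_floor ((hlvl_spec t).trans (hpow_mono ht.2))⟩
    calc (((Finset.Icc 1 T).filter (fun t => lvl t ≤ l)).card : ℝ)
        ≤ ((Finset.Icc 1 (Nat.floor ((1+ε)^l))).card : ℝ) := by
          exact_mod_cast Finset.card_le_card hsub
      _ = (Nat.floor ((1+ε)^l) : ℝ) := by rw [Nat.card_Icc]; simp
      _ ≤ (1+ε)^l := Nat.floor_le (by positivity)
  have hCT : ∀ j, C j ≤ T := by
    intro j
    rw [hC j]
    refine Finset.sup_le fun k _ => Finset.sup_le fun t ht => ?_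
    exact (Finset.mem_Icc.mp (Finset.mem_filter.mp ht).1).2
  have hlvlL : ∀ j, lvl (C j) ≤ L := by
    intro j
    refine hlvl_min _ L (le_trans ?_ hLub)
    exact_mod_cast hCT j
  refine ⟨z, x, hznn, ?_, ?_, ?_, ?_, ?_, ?_, ?_, ?_⟩
  · -- z vanishes off placement
    intro k i l hi
    simp only [hz_def, if_neg hi]
  · -- x nonneg
    intro j l
    simp only [hx_def]
    split <;> norm_num
  · -- total mass of z is 1
    intro k
    rw [Finset.sum_comm, ← hproc k]
    refine Finset.sum_congr rfl fun i hi => ?_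
    calc ∑ l ∈ Finset.range (L+1), z k i l
        = ∑ l ∈ Finset.range (L+1),
            ∑ t ∈ (Finset.Icc 1 T).filter (fun t => lvl t = l), X k i t / (p k i : ℝ) :=
          Finset.sum_congr rfl fun l _ => hz_eq k i hi l
      _ = ∑ t ∈ (Finset.Icc 1 T).filter (fun t => lvl t ≤ L), X k i t / (p k i : ℝ) :=
          haux _ L
      _ = ∑ t ∈ Finset.Icc 1 T, X k i t / (p k i : ℝ) := by
          rw [Finset.filter_true_of_mem hlvlT]
  · -- per-task time bound
    intro k l _
    have heq : ∑ l' ∈ Finset.range (l+1), ∑ i ∈ place k, z k i l' * (p k i : ℝ)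
        = ∑ t ∈ (Finset.Icc 1 T).filter (fun t => lvl t ≤ l), ∑ i ∈ place k, X k i t := by
      rw [Finset.sum_comm]
      rw [Finset.sum_comm (s := (Finset.Icc 1 T).filter (fun t => lvl t ≤ l))]
      refine Finset.sum_congr rfl fun i hi => ?_
      rw [← haux (fun t => X k i t) l]
      refine Finset.sum_congr rfl fun l' _ => ?_
      rw [hz_eq k i hi l', Finset.sum_mul]
      exact Finset.sum_congr rfl fun t _ => div_mul_cancel₀ _ (hpne k i hi)
    rw [heq]
    calc ∑ t ∈ (Finset.Icc 1 T).filter (fun t => lvl t ≤ l), ∑ i ∈ place k, X k i t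
        ≤ ∑ t ∈ (Finset.Icc 1 T).filter (fun t => lvl t ≤ l), 1 := by
          refine Finset.sum_le_sum fun t _ => ?_
          refine le_trans ?_ (hone k t)
          exact Finset.sum_le_sum_of_subset_of_nonneg (Finset.subset_univ _)
            (fun i _ _ => hXnn k i t)
      _ = (((Finset.Icc 1 T).filter (fun t => lvl t ≤ l)).card : ℝ) := by
          rw [Finset.sum_const, nsmul_eq_mul, mul_one]
      _ ≤ (1+ε)^l := hcard l
  · -- per-machine capacity bound
    intro i l _
    have heq : ∑ l' ∈ Finset.range (l+1),
          ∑ k ∈ Finset.univ.filter (fun k => i ∈ place k), z k i l' * (p k i : ℝ) * a k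
        = ∑ t ∈ (Finset.Icc 1 T).filter (fun t => lvl t ≤ l), ∑ k, a k * X k i t := by
      rw [Finset.sum_comm]
      have hstep : ∀ k ∈ Finset.univ.filter (fun k => i ∈ place k),
          ∑ l' ∈ Finset.range (l+1), z k i l' * (p k i : ℝ) * a k
          = ∑ t ∈ (Finset.Icc 1 T).filter (fun t => lvl t ≤ l), X k i t * a k := by
        intro k hk
        have hi : i ∈ place k := (Finset.mem_filter.mp hk).2
        rw [← haux (fun t => X k i t * a k) l]
        refine Finset.sum_congr rfl fun l' _ => ?_
        rw [hz_eq k i hi l', Finset.sum_mul, Finset.sum_mul]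
        exact Finset.sum_congr rfl fun t _ => by
          rw [div_mul_cancel₀ _ (hpne k i hi)]
      rw [Finset.sum_congr rfl hstep, Finset.sum_comm]
      refine Finset.sum_congr rfl fun t _ => ?_
      rw [← Finset.sum_subset (Finset.subset_univ (Finset.univ.filter (fun k => i ∈ place k)))
        (fun k _ hk => ?_)]
      · exact Finset.sum_congr rfl fun k _ => mul_comm _ _
      · have : i ∉ place k := by simpa using hk
        rw [hplc k i t this, mul_zero]
    rw [heq]
    calc ∑ t ∈ (Finset.Icc 1 T).filter (fun t => lvl t ≤ l), ∑ k, a k * X k i t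
        ≤ ∑ t ∈ (Finset.Icc 1 T).filter (fun t => lvl t ≤ l), cap i :=
          Finset.sum_le_sum fun t _ => hpack i t
      _ = (((Finset.Icc 1 T).filter (fun t => lvl t ≤ l)).card : ℝ) * cap i := by
          rw [Finset.sum_const, nsmul_eq_mul]
      _ ≤ (1+ε)^l * cap i := by
          exact mul_le_mul_of_nonneg_right (hcard l) (hcap i).le
      _ = cap i * (1+ε)^l := mul_comm _ _
  · -- job-task linking constraint
    intro j k hjk l _
    have hLHS : ∑ l' ∈ Finset.range (l+1), x j l'
        = if lvl (C j) ∈ Finset.range (l+1) then (1:ℝ) else 0 := by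
      simp only [hx_def]
      exact Finset.sum_ite_eq' (Finset.range (l+1)) (lvl (C j)) (fun _ => (1:ℝ))
    by_cases hcase : lvl (C j) ≤ l
    · have hXzero : ∀ i, ∀ t ∈ Finset.Icc 1 T, ¬ lvl t ≤ l → X k i t = 0 := by
        intro i t ht hnot
        rcases hX01 k i t with h | h
        · exact h
        · exfalso
          apply hnot
          have htC : t ≤ C j := by
            rw [hC j]
            have hkm : k ∈ Finset.univ.filter (fun k => job k = j) := by simp [hjk]
            refine le_trans ?_ (Finset.le_sup hkm)
            have htm : t ∈ (Finset.Icc 1 T).filter (fun t => ∃ i, X k i t = 1) :=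
              Finset.mem_filter.mpr ⟨ht, ⟨i, h⟩⟩
            exact Finset.le_sup (f := id) htm
          refine hlvl_min t l ?_
          calc (t:ℝ) ≤ (C j : ℝ) := by exact_mod_cast htC
            _ ≤ (1+ε)^(lvl (C j)) := hlvl_spec _
            _ ≤ (1+ε)^l := hpow_mono hcase
      have hRHS : ∑ l' ∈ Finset.range (l+1), ∑ i ∈ place k, z k i l' = 1 := by
        rw [Finset.sum_comm, ← hproc k]
        refine Finset.sum_congr rfl fun i hi => ?_
        calc ∑ l' ∈ Finset.range (l+1), z k i l'
            = ∑ l' ∈ Finset.range (l+1),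
                ∑ t ∈ (Finset.Icc 1 T).filter (fun t => lvl t = l'), X k i t / (p k i : ℝ) :=
              Finset.sum_congr rfl fun l' _ => hz_eq k i hi l'
          _ = ∑ t ∈ (Finset.Icc 1 T).filter (fun t => lvl t ≤ l), X k i t / (p k i : ℝ) :=
              haux _ l
          _ = ∑ t ∈ Finset.Icc 1 T, X k i t / (p k i : ℝ) := by
              refine Finset.sum_subset (Finset.filter_subset _ _) fun t ht hnt => ?_
              have : ¬ lvl t ≤ l := by
                intro hh
                exact hnt (Finset.mem_filter.mpr ⟨ht, hh⟩)
              rw [hXzero i t ht this, zero_div]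
      rw [hLHS, hRHS, if_pos (Finset.mem_range.mpr (Nat.lt_succ_of_le hcase))]
    · rw [hLHS, if_neg (by simpa using hcase)]
      exact Finset.sum_nonneg fun l' _ => Finset.sum_nonneg fun i _ => hznn k i l'
  · -- x sums to 1
    intro j
    simp only [hx_def]
    rw [Finset.sum_ite_eq' (Finset.range (L+1)) (lvl (C j)) (fun _ => (1:ℝ))]
    rw [if_pos (Finset.mem_range.mpr (Nat.lt_succ_of_le (hlvlL j)))]
  · -- objective bound
    intro j
    have hsum : ∑ l ∈ Finset.range (L+1),
        (if l = 0 then (0:ℝ) else (1+ε)^(l-1)) * x j l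
        = if lvl (C j) = 0 then (0:ℝ) else (1+ε)^(lvl (C j) - 1) := by
      have : ∀ l, (if l = 0 then (0:ℝ) else (1+ε)^(l-1)) * x j l
          = if l = lvl (C j) then (if l = 0 then (0:ℝ) else (1+ε)^(l-1)) else 0 := by
        intro l
        simp only [hx_def]
        by_cases h : l = lvl (C j) <;> simp [h]
      rw [Finset.sum_congr rfl fun l _ => this l,
        Finset.sum_ite_eq' (Finset.range (L+1)) (lvl (C j))
          (fun l => if l = 0 then (0:ℝ) else (1+ε)^(l-1)),
        if_pos (Finset.mem_range.mpr (Nat.lt_succ_of_le (hlvlL j)))]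
    rw [hsum]
    rcases Nat.eq_zero_or_pos (lvl (C j)) with h0 | hpos
    · rw [if_pos h0]
      exact Nat.cast_nonneg _
    · rw [if_neg hpos.ne']
      have hm : lvl (C j) - 1 < lvl (C j) := Nat.sub_lt hpos one_pos
      exact (hlvl_lt (C j) _ hm).le
end

section
/- Let ε > 0, d_l = (1+ε)^l for l = 0,…,L and d_{−1} = 0. Let x_0,…,x_L ≥ 0 with Σ_{l=0}^L x_l = 1, and let 0 = α_{−1} ≤ α_0 ≤ α_1 ≤ … ≤ α_L = 1 satisfy α_l ≥ Σ_{l'=0}^{l} x_{l'} for every l. Let f : (0,1] → ℝ satisfy f(α) ≤ 3 d_l for all α ∈ (α_{l−1}, α_l] and each l. Then ∫_0^1 f(α) dα ≤ 3 Σ_{l=0}^L d_l x_l; in particular, if additionally x_0 = 0, then ∫_0^1 f(α) dα ≤ 3(1+ε) Σ_{l=0}^L d_{l−1} x_l. -/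
open Finset MeasureTheory

/-- The key analytic step bounding `∫_0^1 f(α) dα` by `3 Σ_l d_l x_l`, and, when `x_0 = 0`,
by `3(1+ε) Σ_l d_{l-1} x_l`.  Here `α l` stands for `α_{l-1}` (so `α 0 = α_{-1} = 0` and
`α (L+1) = α_L = 1`), and `d_l = (1+ε)^l` with `d_{-1} = 0`. -/
theorem integral_bound_by_lp_completion
    (ε : ℝ) (hε : 0 < ε) (L : ℕ)
    (x : ℕ → ℝ) (hx : ∀ l, 0 ≤ x l)
    (hxsum : ∑ l ∈ Finset.range (L + 1), x l = 1)
    (α : ℕ → ℝ)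
    (hα0 : α 0 = 0) (hαlast : α (L + 1) = 1)
    (hαmono : ∀ l ≤ L, α l ≤ α (l + 1))
    (hαdom : ∀ l ≤ L, ∑ l' ∈ Finset.range (l + 1), x l' ≤ α (l + 1))
    (f : ℝ → ℝ)
    (hfint : MeasureTheory.IntegrableOn f (Set.Ioc 0 1))
    (hf : ∀ l ≤ L, ∀ t ∈ Set.Ioc (α l) (α (l + 1)), f t ≤ 3 * (1 + ε) ^ l) :
    (∫ t in Set.Ioc (0 : ℝ) 1, f t) ≤ 3 * ∑ l ∈ Finset.range (L + 1), (1 + ε) ^ l * x l ∧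
      (x 0 = 0 → (∫ t in Set.Ioc (0 : ℝ) 1, f t) ≤
        3 * (1 + ε) * ∑ l ∈ Finset.range (L + 1),
          (if l = 0 then (0 : ℝ) else (1 + ε) ^ (l - 1)) * x l) := by
  have hd1 : (1 : ℝ) ≤ 1 + ε := by linarith
  -- monotonicity of α on [0, L+1]
  have hmono' : ∀ m n : ℕ, m ≤ n → n ≤ L + 1 → α m ≤ α n := by
    intro m n hmn hn
    induction n with
    | zero => simp_all
    | succ k ih =>
        rcases Nat.eq_or_lt_of_le hmn with h | h
        · exact le_of_eq (by rw [h])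
        · exact le_trans (ih (Nat.lt_succ_iff.mp h) (by omega))
            (hαmono k (by omega))
  have hα01 : ∀ n ≤ L + 1, 0 ≤ α n ∧ α n ≤ 1 := by
    intro n hn
    constructor
    · rw [← hα0]; exact hmono' 0 n (Nat.zero_le _) hn
    · rw [← hαlast]; exact hmono' n (L + 1) hn le_rfl
  -- subset of Ioc 0 1
  have hsub : ∀ l ≤ L, Set.Ioc (α l) (α (l + 1)) ⊆ Set.Ioc (0 : ℝ) 1 := by
    intro l hl
    exact Set.Ioc_subset_Ioc (hα01 l (by omega)).1 (hα01 (l + 1) (by omega)).2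
  -- integral splits over the partition, with bound 3 d_l (α(l+1) - α l) per piece
  have hsplit : ∀ n ≤ L + 1,
      (∫ t in Set.Ioc (α 0) (α n), f t) ≤
        ∑ l ∈ Finset.range n, 3 * (1 + ε) ^ l * (α (l + 1) - α l) := by
    intro n hn
    induction n with
    | zero => simp
    | succ k ih =>
        have hk : k ≤ L := by omega
        have h0k : α 0 ≤ α k := hmono' 0 k (Nat.zero_le _) (by omega)
        have hkk : α k ≤ α (k + 1) := hαmono k hk
        have hunion : Set.Ioc (α 0) (α k) ∪ Set.Ioc (α k) (α (k + 1))
            = Set.Ioc (α 0) (α (k + 1)) := Set.Ioc_union_Ioc_eq_Ioc h0k hkk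
        have hdisj : Disjoint (Set.Ioc (α 0) (α k)) (Set.Ioc (α k) (α (k + 1))) :=
          Set.Ioc_disjoint_Ioc.2 (by simp [min_le_max.trans (le_max_left _ _), hkk])
        have hint1 : IntegrableOn f (Set.Ioc (α 0) (α k)) :=
          hfint.mono_set (by
            rw [hα0]
            exact Set.Ioc_subset_Ioc le_rfl (hα01 k (by omega)).2)
        have hint2 : IntegrableOn f (Set.Ioc (α k) (α (k + 1))) :=
          hfint.mono_set (hsub k hk)
        have heq : (∫ t in Set.Ioc (α 0) (α (k + 1)), f t)
            = (∫ t in Set.Ioc (α 0) (α k), f t)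
              + (∫ t in Set.Ioc (α k) (α (k + 1)), f t) := by
          rw [← hunion]
          exact setIntegral_union hdisj measurableSet_Ioc hint1 hint2
        have hpiece : (∫ t in Set.Ioc (α k) (α (k + 1)), f t)
            ≤ 3 * (1 + ε) ^ k * (α (k + 1) - α k) := by
          have hle : (∫ t in Set.Ioc (α k) (α (k + 1)), f t)
              ≤ ∫ _ in Set.Ioc (α k) (α (k + 1)), (3 * (1 + ε) ^ k : ℝ) := by
            refine setIntegral_mono_on hint2 (integrableOn_const ?_)
              measurableSet_Ioc (fun t ht => hf k hk t ht)
            exact measure_Ioc_lt_top.ne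
          have hconst : (∫ _ in Set.Ioc (α k) (α (k + 1)), (3 * (1 + ε) ^ k : ℝ))
              = (α (k + 1) - α k) * (3 * (1 + ε) ^ k) := by
            rw [setIntegral_const, measureReal_def, Real.volume_Ioc, ENNReal.toReal_ofReal (by linarith),
              smul_eq_mul]
          rw [hconst] at hle
          linarith [hle]
        rw [heq, Finset.sum_range_succ]
        exact add_le_add (ih (by omega)) hpiece
  -- Abel summation: Σ d_l (α(l+1) - α l - x l) ≤ d_n (α n - Σ x)
  have habel : ∀ n ≤ L + 1,
      ∑ l ∈ Finset.range n, (1 + ε) ^ l * (α (l + 1) - α l - x l)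
        ≤ (1 + ε) ^ n * (α n - ∑ l ∈ Finset.range n, x l) := by
    intro n hn
    induction n with
    | zero => simp [hα0]
    | succ k ih =>
        have hk : k ≤ L := by omega
        have hslack : ∑ l ∈ Finset.range (k + 1), x l ≤ α (k + 1) := hαdom k hk
        have hdle : (1 + ε) ^ k ≤ (1 + ε) ^ (k + 1) :=
          pow_le_pow_right₀ hd1 (by omega)
        have hdpos : (0 : ℝ) ≤ (1 + ε) ^ k := by positivity
        rw [Finset.sum_range_succ]
        have step : ∑ l ∈ Finset.range k, (1 + ε) ^ l * (α (l + 1) - α l - x l)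
            + (1 + ε) ^ k * (α (k + 1) - α k - x k)
            ≤ (1 + ε) ^ k * (α (k + 1) - ∑ l ∈ Finset.range (k + 1), x l) := by
          have := ih (by omega)
          rw [Finset.sum_range_succ]
          nlinarith [this]
        refine step.trans ?_
        have h1 : (0 : ℝ) ≤ α (k + 1) - ∑ l ∈ Finset.range (k + 1), x l := by linarith
        nlinarith [hdle, h1]
  -- combine: first inequality
  have hmain : (∫ t in Set.Ioc (0 : ℝ) 1, f t)
      ≤ 3 * ∑ l ∈ Finset.range (L + 1), (1 + ε) ^ l * x l := by
    have h1 := hsplit (L + 1) le_rfl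
    rw [hα0, hαlast] at h1
    have h2 := habel (L + 1) le_rfl
    rw [hαlast, hxsum] at h2
    simp only [sub_self, mul_zero] at h2
    have h3 : ∑ l ∈ Finset.range (L + 1), (1 + ε) ^ l * (α (l + 1) - α l)
        ≤ ∑ l ∈ Finset.range (L + 1), (1 + ε) ^ l * x l := by
      have : ∑ l ∈ Finset.range (L + 1), (1 + ε) ^ l * (α (l + 1) - α l - x l)
          = ∑ l ∈ Finset.range (L + 1), (1 + ε) ^ l * (α (l + 1) - α l)
            - ∑ l ∈ Finset.range (L + 1), (1 + ε) ^ l * x l := by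
        rw [← Finset.sum_sub_distrib]; congr 1 with l; ring
      linarith [this ▸ h2]
    calc (∫ t in Set.Ioc (0 : ℝ) 1, f t)
        ≤ ∑ l ∈ Finset.range (L + 1), 3 * (1 + ε) ^ l * (α (l + 1) - α l) := h1
      _ = 3 * ∑ l ∈ Finset.range (L + 1), (1 + ε) ^ l * (α (l + 1) - α l) := by
          rw [Finset.mul_sum]; congr 1 with l; ring
      _ ≤ 3 * ∑ l ∈ Finset.range (L + 1), (1 + ε) ^ l * x l := by linarith
  refine ⟨hmain, fun hx0 => ?_⟩
  have hre : ∑ l ∈ Finset.range (L + 1), (1 + ε) ^ l * x l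
      = (1 + ε) * ∑ l ∈ Finset.range (L + 1),
          (if l = 0 then (0 : ℝ) else (1 + ε) ^ (l - 1)) * x l := by
    rw [Finset.mul_sum]
    refine Finset.sum_congr rfl fun l _ => ?_
    rcases Nat.eq_zero_or_pos l with h | h
    · simp [h, hx0]
    · obtain ⟨m, rfl⟩ := Nat.exists_eq_succ_of_ne_zero (by omega : l ≠ 0)
      rw [if_neg (by omega)]
      simp only [Nat.succ_sub_one, pow_succ]
      ring
  calc (∫ t in Set.Ioc (0 : ℝ) 1, f t)
      ≤ 3 * ∑ l ∈ Finset.range (L + 1), (1 + ε) ^ l * x l := hmain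
    _ = 3 * (1 + ε) * ∑ l ∈ Finset.range (L + 1),
          (if l = 0 then (0 : ℝ) else (1 + ε) ^ (l - 1)) * x l := by rw [hre]; ring
end

section
/- For every valid schedule without migration (preemptive or nonpreemptive) with job completion times C_j, there exists a feasible solution of the linear program (LP2) whose completion-time values C̃_j satisfy C̃_j ≤ C_j for every job j. Consequently, the optimal value of (LP2) is at most the minimum of Σ_j w_j C_j over valid nonpreemptive schedules, and also at most the minimum over valid preemptive schedules without migration. -/
open Finset MeasureTheory
open scoped Classical

/-- For every valid schedule without migration (preemptive or nonpreemptive) there exists a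
feasible solution of (LP2) whose completion-time values `C̃_j` satisfy `C̃_j ≤ C_j` for every
job `j`. -/
theorem lp2_lower_bounds_opt
    (M N : ℕ) (Task : Type) [Fintype Task]
    (job : Task → Fin N)
    (cap : Fin M → ℝ) (hcap : ∀ i, 0 < cap i)
    (w : Fin N → ℝ) (hw : ∀ j, 0 < w j)
    (a : Task → ℝ) (ha : ∀ k, 0 < a k)
    (place : Task → Finset (Fin M)) (hplace : ∀ k, (place k).Nonempty)
    (p : Task → Fin M → ℕ) (hp : ∀ k, ∀ i ∈ place k, 1 ≤ p k i)
    (T : ℕ)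
    (hT : T = Finset.univ.sup fun i => ∑ k ∈ Finset.univ.filter (fun k => i ∈ place k), p k i)
    -- (LP2) parameter: L smallest with 2^L ≥ T
    (L : ℕ) (hLub : T ≤ 2 ^ L) (hLmin : ∀ L' : ℕ, T ≤ 2 ^ L' → L ≤ L')
    -- a valid schedule without migration over the time slots 1,…,T:
    -- each task is processed entirely on the machine `machine k` of its placement set
    (machine : Task → Fin M) (hmach : ∀ k, machine k ∈ place k)
    (X : Task → ℕ → ℝ)
    (hX01 : ∀ k t, X k t = 0 ∨ X k t = 1)
    (hXdom : ∀ k t, X k t = 1 → 1 ≤ t ∧ t ≤ T)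
    (hpack : ∀ i t, ∑ k ∈ Finset.univ.filter (fun k => machine k = i), a k * X k t ≤ cap i)
    (hproc : ∀ k, ∑ t ∈ Finset.Icc 1 T, X k t = (p k (machine k) : ℝ))
    -- job completion times
    (C : Fin N → ℕ)
    (hC : ∀ j, C j = Finset.sup (Finset.univ.filter fun k => job k = j)
      (fun k => Finset.sup ((Finset.Icc 1 T).filter fun t => X k t = 1) id)) :
    ∃ (z : Task → Fin M → ℕ → ℝ) (x : Fin N → ℕ → ℝ),
      (∀ k i l, 0 ≤ z k i l) ∧
      (∀ k i l, i ∉ place k → z k i l = 0) ∧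
      (∀ j l, 0 ≤ x j l) ∧
      (∀ k i, ∀ l ≤ L, (2 : ℝ) ^ l < (p k i : ℝ) → z k i l = 0) ∧
      (∀ k, ∑ l ∈ Finset.range (L + 1), ∑ i ∈ place k, z k i l = 1) ∧
      (∀ k, ∀ l ≤ L, ∑ l' ∈ Finset.range (l + 1), ∑ i ∈ place k,
          z k i l' * (p k i : ℝ) ≤ 2 ^ l) ∧
      (∀ i, ∀ l ≤ L, ∑ l' ∈ Finset.range (l + 1),
          ∑ k ∈ Finset.univ.filter (fun k => i ∈ place k),
            z k i l' * (p k i : ℝ) * a k ≤ cap i * 2 ^ l) ∧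
      (∀ (j : Fin N) (k : Task), job k = j → ∀ l ≤ L,
          ∑ l' ∈ Finset.range (l + 1), x j l' ≤
            ∑ l' ∈ Finset.range (l + 1), ∑ i ∈ place k, z k i l') ∧
      (∀ j, ∑ l ∈ Finset.range (L + 1), x j l = 1) ∧
      (∀ j, ∑ l ∈ Finset.range (L + 1),
          (if l = 0 then (0 : ℝ) else (2 : ℝ) ^ (l - 1)) * x j l ≤ (C j : ℝ)) := by
  classical
  -- completion time of each task
  set c : Task → ℕ := fun k =>
    Finset.sup ((Finset.Icc 1 T).filter fun t => X k t = 1) id with hcdef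
  have hX0 : ∀ k t, 0 ≤ X k t := by
    intro k t; rcases hX01 k t with h | h <;> simp [h]
  have hle_c : ∀ k t, X k t = 1 → t ≤ c k := by
    intro k t ht
    have htT := hXdom k t ht
    exact Finset.le_sup (f := id)
      (by simp [Finset.mem_filter, Finset.mem_Icc, htT.1, htT.2, ht])
  have hcT : ∀ k, c k ≤ T := by
    intro k
    apply Finset.sup_le
    intro t ht
    simp only [Finset.mem_filter, Finset.mem_Icc] at ht
    exact ht.1.2
  -- p k (machine k) ≤ c k
  have hp_le_c : ∀ k, p k (machine k) ≤ c k := by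
    intro k
    have h1 : (p k (machine k) : ℝ) ≤ (c k : ℝ) := by
      rw [← hproc k]
      calc ∑ t ∈ Finset.Icc 1 T, X k t
          ≤ ∑ t ∈ Finset.Icc 1 T, (if X k t = 1 then (1:ℝ) else 0) := by
            apply Finset.sum_le_sum; intro t _
            rcases hX01 k t with h | h <;> simp [h]
        _ = (((Finset.Icc 1 T).filter fun t => X k t = 1).card : ℝ) := by
            rw [Finset.sum_boole]
        _ ≤ (c k : ℝ) := by
            have hsub : ((Finset.Icc 1 T).filter fun t => X k t = 1) ⊆
                Finset.Icc 1 (c k) := by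
              intro t ht
              simp only [Finset.mem_filter, Finset.mem_Icc] at ht ⊢
              exact ⟨ht.1.1, hle_c k t ht.2⟩
            have := Finset.card_le_card hsub
            rw [Nat.card_Icc] at this
            exact_mod_cast le_trans this (by omega)
    exact_mod_cast h1
  -- the level function
  have hex : ∀ n : ℕ, ∃ l, n ≤ 2 ^ l := fun n => ⟨n, (Nat.lt_two_pow_self (n := n)).le⟩
  set lvl : ℕ → ℕ := fun n => Nat.find (hex n) with hlvldef
  have hlvl_spec : ∀ n, n ≤ 2 ^ lvl n := fun n => Nat.find_spec (hex n)
  have hlvl_le : ∀ n l, n ≤ 2 ^ l → lvl n ≤ l := fun n l h => Nat.find_le h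
  have hlvl_iff : ∀ n l, lvl n ≤ l ↔ n ≤ 2 ^ l := by
    intro n l
    constructor
    · intro h
      exact le_trans (hlvl_spec n) (Nat.pow_le_pow_right (by norm_num) h)
    · exact hlvl_le n l
  have hlkL : ∀ k, lvl (c k) ≤ L := fun k => hlvl_le _ _ (le_trans (hcT k) hLub)
  have hCT : ∀ j, C j ≤ T := by
    intro j
    rw [hC j]
    exact Finset.sup_le fun k _ => hcT k
  have hljL : ∀ j, lvl (C j) ≤ L := fun j => hlvl_le _ _ (le_trans (hCT j) hLub)
  have hck_le_Cj : ∀ (j : Fin N) (k : Task), job k = j → c k ≤ C j := by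
    intro j k hk
    rw [hC j]
    exact Finset.le_sup (by simp [hk])
  -- inner sum helper
  have hinner : ∀ (k : Task) (l : ℕ) (f : Fin M → ℝ),
      (∑ i ∈ place k, if i = machine k ∧ l = lvl (c k) then f i else 0)
        = if l = lvl (c k) then f (machine k) else 0 := by
    intro k l f
    by_cases h : l = lvl (c k)
    · subst h
      simp only [and_true]
      rw [Finset.sum_ite_eq' (place k) (machine k) f]
      simp [hmach k]
    · simp [h]
  -- outer sum helper
  have houter : ∀ (m l : ℕ) (A : ℝ),
      (∑ l' ∈ Finset.range (l + 1), if l' = m then A else 0)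
        = if m ≤ l then A else 0 := by
    intro m l A
    rw [Finset.sum_ite_eq' (Finset.range (l + 1)) m (fun _ => A)]
    simp [Nat.lt_succ_iff]
  refine ⟨fun k i l => if i = machine k ∧ l = lvl (c k) then 1 else 0,
          fun j l => if l = lvl (C j) then 1 else 0,
          ?_, ?_, ?_, ?_, ?_, ?_, ?_, ?_, ?_, ?_⟩
  · intro k i l; dsimp only; split <;> norm_num
  · intro k i l hi
    have : i ≠ machine k := fun h => hi (h ▸ hmach k)
    simp [this]
  · intro j l; dsimp only; split <;> norm_num
  · intro k i l _ hlt
    by_contra h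
    have hc' : i = machine k ∧ l = lvl (c k) := by
      by_contra h'; exact h (by simp [h'])
    obtain ⟨hi, hl⟩ := hc'
    have h1 : p k i ≤ 2 ^ l := by
      rw [hi, hl]
      exact le_trans (hp_le_c k) (hlvl_spec (c k))
    have : (p k i : ℝ) ≤ (2 : ℝ) ^ l := by exact_mod_cast h1
    linarith
  · intro k
    have : ∀ l ∈ Finset.range (L + 1),
        (∑ i ∈ place k, if i = machine k ∧ l = lvl (c k) then (1:ℝ) else 0)
          = if l = lvl (c k) then (1:ℝ) else 0 := fun l _ => hinner k l (fun _ => 1)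
    rw [Finset.sum_congr rfl this, Finset.sum_ite_eq' (Finset.range (L+1)) (lvl (c k)) (fun _ => (1:ℝ))]
    simp [Nat.lt_succ_iff, hlkL k]
  · intro k l hl
    have hrw : ∀ l' ∈ Finset.range (l + 1),
        (∑ i ∈ place k, (if i = machine k ∧ l' = lvl (c k) then (1:ℝ) else 0) * (p k i : ℝ))
          = if l' = lvl (c k) then (p k (machine k) : ℝ) else 0 := by
      intro l' _
      rw [show (∑ i ∈ place k, (if i = machine k ∧ l' = lvl (c k) then (1:ℝ) else 0) * (p k i : ℝ))
            = ∑ i ∈ place k, (if i = machine k ∧ l' = lvl (c k) then (p k i : ℝ) else 0) by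
          apply Finset.sum_congr rfl; intro i _; split <;> simp]
      exact hinner k l' _
    rw [Finset.sum_congr rfl hrw, houter]
    split
    · rename_i h
      have h1 : (p k (machine k) : ℕ) ≤ 2 ^ l :=
        le_trans (hp_le_c k) ((hlvl_iff (c k) l).1 h)
      calc (p k (machine k) : ℝ) ≤ ((2:ℕ) ^ l : ℝ) := by exact_mod_cast h1
        _ = (2:ℝ) ^ l := by push_cast; ring
    · positivity
  · -- machine capacity constraint
    intro i l hl
    rw [Finset.sum_comm]
    have hrw : ∀ k ∈ Finset.univ.filter (fun k => i ∈ place k),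
        (∑ l' ∈ Finset.range (l + 1),
          (if i = machine k ∧ l' = lvl (c k) then (1:ℝ) else 0) * (p k i : ℝ) * a k)
          = if machine k = i ∧ c k ≤ 2 ^ l then (p k i : ℝ) * a k else 0 := by
      intro k _
      by_cases hik : i = machine k
      · simp only [hik, eq_self_iff_true, true_and, ite_mul, one_mul, zero_mul]
        rw [houter]
        simp only [hlvl_iff]
      · have : machine k ≠ i := fun h => hik h.symm
        simp [hik, this]
    rw [Finset.sum_congr rfl hrw]
    clear hrw
    -- now the combinatorial bound
    have key : ∀ k, (machine k = i ∧ c k ≤ 2 ^ l) →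
        (p k i : ℝ) * a k = ∑ t ∈ Finset.Icc 1 T, a k * X k t := by
      intro k ⟨h1, _⟩
      rw [← h1, ← hproc k, Finset.sum_mul]
      apply Finset.sum_congr rfl; intro t _; ring
    calc (∑ k ∈ Finset.univ.filter (fun k => i ∈ place k),
            if machine k = i ∧ c k ≤ 2 ^ l then (p k i : ℝ) * a k else 0)
        = ∑ k ∈ Finset.univ.filter (fun k => i ∈ place k),
            if machine k = i ∧ c k ≤ 2 ^ l then (∑ t ∈ Finset.Icc 1 T, a k * X k t) else 0 := by
          apply Finset.sum_congr rfl; intro k _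
          split
          · rename_i h; exact key k h
          · rfl
      _ = ∑ k ∈ Finset.univ.filter (fun k => i ∈ place k), ∑ t ∈ Finset.Icc 1 T,
            (if machine k = i ∧ c k ≤ 2 ^ l then a k * X k t else 0) := by
          apply Finset.sum_congr rfl; intro k _
          split <;> simp
      _ = ∑ t ∈ Finset.Icc 1 T, ∑ k ∈ Finset.univ.filter (fun k => i ∈ place k),
            (if machine k = i ∧ c k ≤ 2 ^ l then a k * X k t else 0) := Finset.sum_comm
      _ ≤ ∑ t ∈ Finset.Icc 1 T, (if t ≤ 2 ^ l then cap i else 0) := by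
          apply Finset.sum_le_sum
          intro t ht
          simp only [Finset.mem_Icc] at ht
          by_cases htl : t ≤ 2 ^ l
          · simp only [htl, if_true]
            calc (∑ k ∈ Finset.univ.filter (fun k => i ∈ place k),
                    if machine k = i ∧ c k ≤ 2 ^ l then a k * X k t else 0)
                ≤ ∑ k ∈ Finset.univ.filter (fun k => i ∈ place k),
                    (if machine k = i then a k * X k t else 0) := by
                  apply Finset.sum_le_sum
                  intro k _
                  by_cases h : machine k = i ∧ c k ≤ 2 ^ l
                  · simp [h, h.1]
                  · simp only [h, if_false]
                    split
                    · exact mul_nonneg (ha k).le (hX0 k t)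
                    · exact le_refl 0
              _ = ∑ k ∈ Finset.univ.filter (fun k => machine k = i), a k * X k t := by
                  rw [Finset.sum_filter, Finset.sum_filter]
                  apply Finset.sum_congr rfl
                  intro k _
                  by_cases h : machine k = i
                  · simp [h, hmach k, h ▸ hmach k]
                  · simp [h]
              _ ≤ cap i := hpack i t
          · simp only [htl, if_false]
            apply Finset.sum_nonpos
            intro k _
            split
            · rename_i h
              have hx0 : X k t = 0 := by
                rcases hX01 k t with h0 | h1
                · exact h0
                · exact absurd (le_trans (hle_c k t h1) h.2) htl
              simp [hx0]
            · exact le_refl 0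
      _ = (((Finset.Icc 1 T).filter fun t => t ≤ 2 ^ l).card : ℝ) * cap i := by
          rw [Finset.sum_ite, Finset.sum_const, Finset.sum_const]
          simp [mul_comm]
      _ ≤ (2 : ℝ) ^ l * cap i := by
          apply mul_le_mul_of_nonneg_right _ (hcap i).le
          have hsub : ((Finset.Icc 1 T).filter fun t => t ≤ 2 ^ l) ⊆
              Finset.Icc 1 (2 ^ l) := by
            intro t ht
            simp only [Finset.mem_filter, Finset.mem_Icc] at ht ⊢
            exact ⟨ht.1.1, ht.2⟩
          have := Finset.card_le_card hsub
          rw [Nat.card_Icc] at this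
          have h2 : (((Finset.Icc 1 T).filter fun t => t ≤ 2 ^ l).card) ≤ 2 ^ l := by
            simpa using this
          calc ((((Finset.Icc 1 T).filter fun t => t ≤ 2 ^ l).card : ℕ) : ℝ)
              ≤ ((2 ^ l : ℕ) : ℝ) := by exact_mod_cast h2
            _ = (2:ℝ) ^ l := by push_cast; ring
      _ = cap i * 2 ^ l := mul_comm _ _
  · -- job-task precedence
    intro j k hk l hl
    have h1 : ∀ l' ∈ Finset.range (l + 1),
        (∑ i ∈ place k, if i = machine k ∧ l' = lvl (c k) then (1:ℝ) else 0)
          = if l' = lvl (c k) then (1:ℝ) else 0 := fun l' _ => hinner k l' _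
    rw [Finset.sum_congr rfl h1, houter, houter]
    have hmono : lvl (c k) ≤ lvl (C j) :=
      hlvl_le _ _ (le_trans (hck_le_Cj j k hk) (hlvl_spec (C j)))
    by_cases h : lvl (C j) ≤ l
    · simp [h, le_trans hmono h]
    · simp only [h, if_false]
      split <;> norm_num
  · intro j
    rw [Finset.sum_ite_eq' (Finset.range (L+1)) (lvl (C j)) (fun _ => (1:ℝ))]
    simp [Nat.lt_succ_iff, hljL j]
  · intro j
    have hrw : (∑ l ∈ Finset.range (L + 1),
        (if l = 0 then (0 : ℝ) else (2 : ℝ) ^ (l - 1)) * (if l = lvl (C j) then (1:ℝ) else 0))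
        = ∑ l ∈ Finset.range (L + 1),
          (if l = lvl (C j) then (if l = 0 then (0 : ℝ) else (2 : ℝ) ^ (l - 1)) else 0) := by
      apply Finset.sum_congr rfl; intro l _
      by_cases h : l = lvl (C j) <;> simp [h]
    rw [hrw, Finset.sum_ite_eq' (Finset.range (L+1)) (lvl (C j))]
    simp only [Finset.mem_range, Nat.lt_succ_iff, hljL j, if_true]
    by_cases h0 : lvl (C j) = 0
    · simp [h0]
    · simp only [h0, if_false]
      obtain ⟨m, hm⟩ : ∃ m, lvl (C j) = m + 1 := ⟨lvl (C j) - 1, by omega⟩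
      have hmin : ¬ (C j ≤ 2 ^ m) := fun hle => by have := hlvl_le _ _ hle; omega
      have h2 : 2 ^ m < C j := by omega
      have hlt : (2:ℝ) ^ m < (C j : ℝ) := by exact_mod_cast h2
      rw [hm]
      simpa using hlt.le
end

section
/- Let v_1 ≥ v_2 ≥ … ≥ v_n > 0 and z_1,…,z_n ∈ [0,1], and let C = ⌈Σ_{q=1}^n z_q⌉. Define weights w_{qc} ≥ 0 for q ∈ {1,…,n}, c ∈ {1,…,C} by processing tasks in the order q = 1,…,n and filling copies c = 1,2,… sequentially: each task q distributes its total weight z_q over consecutive copies, topping up the current copy to total weight exactly 1 before moving to the next copy (so Σ_{c} w_{qc} = z_q for every q, Σ_q w_{qc} = 1 for every c < C, and Σ_q w_{qC} ≤ 1). Then for every partial assignment σ that selects for each copy c at most one task σ(c) with w_{σ(c),c} > 0, the total selected volume satisfies Σ_c v_{σ(c)} ≤ v_1 + Σ_{q=1}^n v_q z_q. -/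
open Finset

/-- Difference-of-clamps identity used for telescoping the greedy weights. -/
private lemma clamp_diff (a b x y : ℝ) (hab : a ≤ b) (hxy : x ≤ y) :
    max 0 (min y b - max x a) = max a (min y b) - max a (min x b) := by
  simp only [max_def, min_def]
  split_ifs <;> linarith

/-- Telescoping sum over `Icc 1 n`. -/
private lemma sum_Icc_one_sub (f : ℕ → ℝ) (n : ℕ) :
    ∑ i ∈ Finset.Icc 1 n, (f i - f (i - 1)) = f n - f 0 := by
  induction n with
  | zero => simp
  | succ k ih =>
    rw [Finset.sum_Icc_succ_top (by omega : 1 ≤ k + 1), ih]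
    simp only [Nat.add_sub_cancel]
    ring

/-- Prefix sums of the fractions. -/
private def Zp (z : ℕ → ℝ) (q : ℕ) : ℝ := ∑ q' ∈ Finset.Icc 1 q, z q'

/-- Volume bound for the greedy copy-filling procedure (Lemma 6): tasks `q = 1,…,n` with
nonincreasing volumes `v_q` and fractions `z_q ∈ [0,1]` are distributed, in order, over
`C = ⌈Σ_q z_q⌉` copies filled sequentially (copy `c` occupies the mass interval `(c-1, c]`, task
`q` the mass interval `(Z_{q-1}, Z_q]`, so `w_{qc}` is the overlap of the two).  Then any partial
assignment selecting for each copy at most one task with positive weight on it has total selected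
volume at most `v_1 + Σ_q v_q z_q`. -/
theorem copy_filling_volume_bound
    (n : ℕ) (hn : 0 < n)
    (v z : ℕ → ℝ)
    (hvpos : ∀ q, 1 ≤ q → q ≤ n → 0 < v q)
    (hvsorted : ∀ q q', 1 ≤ q → q ≤ q' → q' ≤ n → v q' ≤ v q)
    (hz : ∀ q, 1 ≤ q → q ≤ n → z q ∈ Set.Icc (0 : ℝ) 1)
    (C : ℕ) (hC : C = ⌈∑ q ∈ Finset.Icc 1 n, z q⌉₊)
    (w : ℕ → ℕ → ℝ)
    (hw : ∀ q c, w q c =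
      max 0 (min (∑ q' ∈ Finset.Icc 1 q, z q') (c : ℝ)
        - max (∑ q' ∈ Finset.Icc 1 (q - 1), z q') ((c : ℝ) - 1)))
    (S : Finset ℕ) (hS : S ⊆ Finset.Icc 1 C)
    (σ : ℕ → ℕ)
    (hσdom : ∀ c ∈ S, σ c ∈ Finset.Icc 1 n)
    (hσpos : ∀ c ∈ S, 0 < w (σ c) c) :
    ∑ c ∈ S, v (σ c) ≤ v 1 + ∑ q ∈ Finset.Icc 1 n, v q * z q := by
  classical
  have hz0 : ∀ q, 1 ≤ q → q ≤ n → 0 ≤ z q := fun q h1 h2 => (hz q h1 h2).1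
  have hZ0 : Zp z 0 = 0 := by simp [Zp]
  have hZmono : ∀ a b : ℕ, a ≤ b → b ≤ n → Zp z a ≤ Zp z b := by
    intro a b hab hbn
    refine Finset.sum_le_sum_of_subset_of_nonneg
      (Finset.Icc_subset_Icc_right hab) ?_
    intro q hq _
    rw [Finset.mem_Icc] at hq
    exact hz0 q hq.1 (hq.2.trans hbn)
  have hZnn : ∀ q : ℕ, q ≤ n → 0 ≤ Zp z q := fun q h =>
    hZ0 ▸ hZmono 0 q (Nat.zero_le q) h
  have hZstep : ∀ q : ℕ, 1 ≤ q → Zp z q = Zp z (q - 1) + z q := by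
    intro q h1
    obtain ⟨k, rfl⟩ : ∃ k, q = k + 1 := ⟨q - 1, by omega⟩
    simp only [Zp, Nat.add_sub_cancel]
    rw [Finset.sum_Icc_succ_top (by omega)]
  have hw' : ∀ q c : ℕ, w q c =
      max 0 (min (Zp z q) (c : ℝ) - max (Zp z (q - 1)) ((c : ℝ) - 1)) := hw
  have hwnn : ∀ q c : ℕ, 0 ≤ w q c := fun q c => (hw' q c) ▸ le_max_left 0 _
  have hwpos : ∀ q c : ℕ, 0 < w q c →
      Zp z (q - 1) < (c : ℝ) ∧ (c : ℝ) - 1 < Zp z q := by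
    intro q c h
    rw [hw' q c, lt_max_iff] at h
    have h' := sub_pos.mp (h.resolve_left (lt_irrefl 0))
    constructor
    · calc Zp z (q - 1) ≤ max (Zp z (q - 1)) ((c : ℝ) - 1) := le_max_left _ _
        _ < min (Zp z q) c := h'
        _ ≤ c := min_le_right _ _
    · calc (c : ℝ) - 1 ≤ max (Zp z (q - 1)) ((c : ℝ) - 1) := le_max_right _ _
        _ < min (Zp z q) c := h'
        _ ≤ Zp z q := min_le_left _ _
  have hw1 : ∀ q c : ℕ, 1 ≤ q → q ≤ n →
      w q c = max ((c : ℝ) - 1) (min (Zp z q) c)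
        - max ((c : ℝ) - 1) (min (Zp z (q - 1)) c) := by
    intro q c h1 h2
    rw [hw' q c]
    exact clamp_diff ((c : ℝ) - 1) c (Zp z (q - 1)) (Zp z q)
      (by linarith) (hZmono (q - 1) q (by omega) h2)
  have hw2 : ∀ q c : ℕ, 1 ≤ q → q ≤ n →
      w q c = max (Zp z (q - 1)) (min (c : ℝ) (Zp z q))
        - max (Zp z (q - 1)) (min ((c : ℝ) - 1) (Zp z q)) := by
    intro q c h1 h2
    rw [hw' q c, min_comm (Zp z q) (c : ℝ), max_comm (Zp z (q - 1)) ((c : ℝ) - 1)]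
    exact clamp_diff (Zp z (q - 1)) (Zp z q) ((c : ℝ) - 1) c
      (hZmono (q - 1) q (by omega) h2) (by linarith)
  -- every copy `c` with `c ≤ Z n` is completely full
  have hfull : ∀ c : ℕ, 1 ≤ c → (c : ℝ) ≤ Zp z n →
      ∑ q ∈ Finset.Icc 1 n, w q c = 1 := by
    intro c hc1 hcZ
    have hc1' : (1 : ℝ) ≤ (c : ℝ) := by exact_mod_cast hc1
    calc ∑ q ∈ Finset.Icc 1 n, w q c
        = ∑ q ∈ Finset.Icc 1 n,
            (max ((c : ℝ) - 1) (min (Zp z q) c) - max ((c : ℝ) - 1) (min (Zp z (q - 1)) c)) := by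
          refine Finset.sum_congr rfl fun q hq => ?_
          rw [Finset.mem_Icc] at hq
          exact hw1 q c hq.1 hq.2
      _ = max ((c : ℝ) - 1) (min (Zp z n) c) - max ((c : ℝ) - 1) (min (Zp z 0) c) :=
          sum_Icc_one_sub _ n
      _ = 1 := by
          rw [hZ0, min_eq_right hcZ, min_eq_left (by linarith : (0 : ℝ) ≤ (c : ℝ)),
            max_eq_left (by linarith : (0 : ℝ) ≤ (c : ℝ) - 1),
            max_eq_right (by linarith : (c : ℝ) - 1 ≤ (c : ℝ))]
          ring
  -- each task receives at most `z q` total weight over any initial segment of copies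
  have htask : ∀ q : ℕ, 1 ≤ q → q ≤ n → ∀ M : ℕ,
      ∑ c ∈ Finset.Icc 1 M, w q c ≤ z q := by
    intro q hq1 hqn M
    have h1 : ∑ c ∈ Finset.Icc 1 M, w q c
        = ∑ c ∈ Finset.Icc 1 M,
            (max (Zp z (q - 1)) (min ((c : ℕ) : ℝ) (Zp z q))
              - max (Zp z (q - 1)) (min (((c - 1 : ℕ) : ℕ) : ℝ) (Zp z q))) := by
      refine Finset.sum_congr rfl fun c hc => ?_
      rw [Finset.mem_Icc] at hc
      have hcast : ((c - 1 : ℕ) : ℝ) = (c : ℝ) - 1 := by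
        have h1c : (1 : ℕ) ≤ c := hc.1
        push_cast [h1c]
        ring
      rw [hw2 q c hq1 hqn, hcast]
    rw [h1]
    have h2 := sum_Icc_one_sub (fun j : ℕ => max (Zp z (q - 1)) (min (j : ℝ) (Zp z q))) M
    rw [h2]
    simp only [Nat.cast_zero]
    rw [min_eq_left (hZnn q hqn), max_eq_left (hZnn (q - 1) (by omega))]
    have hstep := hZstep q hq1
    have hub : max (Zp z (q - 1)) (min (M : ℝ) (Zp z q)) ≤ Zp z q :=
      max_le (hZmono (q - 1) q (by omega) hqn) (min_le_right _ _)
    linarith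
  -- split off the (at most one) copy numbered 1
  have hsplit := Finset.sum_filter_add_sum_filter_not S (fun c => 2 ≤ c)
    (fun c => v (σ c))
  have hpart1 : ∑ c ∈ S.filter (fun c => ¬ 2 ≤ c), v (σ c) ≤ v 1 := by
    have hsub : S.filter (fun c => ¬ 2 ≤ c) ⊆ {1} := by
      intro c hc
      simp only [Finset.mem_filter] at hc
      have hcC := hS hc.1
      rw [Finset.mem_Icc] at hcC
      simp only [Finset.mem_singleton]
      omega
    rcases Finset.subset_singleton_iff.mp hsub with h | h
    · rw [h, Finset.sum_empty]
      exact le_of_lt (hvpos 1 le_rfl hn)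
    · rw [h, Finset.sum_singleton]
      have h1S : (1 : ℕ) ∈ S := by
        have hm : (1 : ℕ) ∈ S.filter (fun c => ¬ 2 ≤ c) := by
          rw [h]; exact Finset.mem_singleton_self 1
        exact (Finset.mem_filter.mp hm).1
      have hd := hσdom 1 h1S
      rw [Finset.mem_Icc] at hd
      exact hvsorted 1 (σ 1) le_rfl hd.1 hd.2
  have hpart2 : ∑ c ∈ S.filter (fun c => 2 ≤ c), v (σ c)
      ≤ ∑ q ∈ Finset.Icc 1 n, v q * z q := by
    have key : ∀ c ∈ S.filter (fun c => 2 ≤ c),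
        v (σ c) ≤ ∑ q ∈ Finset.Icc 1 n, v q * w q (c - 1) := by
      intro c hc
      rw [Finset.mem_filter] at hc
      obtain ⟨hcS, hc2⟩ := hc
      have hsdom := hσdom c hcS
      rw [Finset.mem_Icc] at hsdom
      have hspos := hwpos (σ c) c (hσpos c hcS)
      have hcast : ((c - 1 : ℕ) : ℝ) = (c : ℝ) - 1 := by
        have h1c : (1 : ℕ) ≤ c := by omega
        push_cast [h1c]
        ring
      have hcZn : ((c - 1 : ℕ) : ℝ) ≤ Zp z n := by
        rw [hcast]
        have h2 := hspos.2
        have h3 := hZmono (σ c) n hsdom.2 le_rfl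
        linarith
      have hfullc := hfull (c - 1) (by omega) hcZn
      calc v (σ c) = ∑ q ∈ Finset.Icc 1 n, v (σ c) * w q (c - 1) := by
            rw [← Finset.mul_sum, hfullc, mul_one]
        _ ≤ ∑ q ∈ Finset.Icc 1 n, v q * w q (c - 1) := by
            apply Finset.sum_le_sum
            intro q hq
            rw [Finset.mem_Icc] at hq
            rcases eq_or_lt_of_le (hwnn q (c - 1)) with h0 | h0
            · rw [← h0, mul_zero, mul_zero]
            · refine mul_le_mul_of_nonneg_right ?_ (hwnn q (c - 1))
              have hq1 := (hwpos q (c - 1) h0).1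
              rw [hcast] at hq1
              have hZlt : Zp z (q - 1) < Zp z (σ c) := by linarith [hspos.2]
              have hqs : q ≤ σ c := by
                by_contra hcon
                push_neg at hcon
                have := hZmono (σ c) (q - 1) (by omega) (by omega)
                linarith
              exact hvsorted q (σ c) hq.1 hqs hsdom.2
    calc ∑ c ∈ S.filter (fun c => 2 ≤ c), v (σ c)
        ≤ ∑ c ∈ S.filter (fun c => 2 ≤ c), ∑ q ∈ Finset.Icc 1 n, v q * w q (c - 1) :=
          Finset.sum_le_sum key
      _ = ∑ d ∈ (S.filter (fun c => 2 ≤ c)).image (fun c => c - 1),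
            ∑ q ∈ Finset.Icc 1 n, v q * w q d := by
          rw [Finset.sum_image]
          intro a ha b hb hab
          rw [Finset.mem_coe, Finset.mem_filter] at ha hb
          simp only at hab
          omega
      _ ≤ ∑ d ∈ Finset.Icc 1 (C - 1), ∑ q ∈ Finset.Icc 1 n, v q * w q d := by
          apply Finset.sum_le_sum_of_subset_of_nonneg
          · intro d hd
            rw [Finset.mem_image] at hd
            obtain ⟨c, hc, rfl⟩ := hd
            rw [Finset.mem_filter] at hc
            have := hS hc.1
            rw [Finset.mem_Icc] at this ⊢
            omega
          · intro d _ _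
            refine Finset.sum_nonneg fun q hq => ?_
            rw [Finset.mem_Icc] at hq
            exact mul_nonneg (le_of_lt (hvpos q hq.1 hq.2)) (hwnn q d)
      _ = ∑ q ∈ Finset.Icc 1 n, v q * ∑ d ∈ Finset.Icc 1 (C - 1), w q d := by
          rw [Finset.sum_comm]
          simp_rw [Finset.mul_sum]
      _ ≤ ∑ q ∈ Finset.Icc 1 n, v q * z q := by
          refine Finset.sum_le_sum fun q hq => ?_
          rw [Finset.mem_Icc] at hq
          exact mul_le_mul_of_nonneg_left (htask q hq.1 hq.2 (C - 1))
            (le_of_lt (hvpos q hq.1 hq.2))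
  linarith
end

section
/- Let v > 0 and consider n tasks, where task j has size a_j ∈ (0,1] and processing time p_j ∈ (0,1], and suppose the total volume satisfies Σ_{j=1}^n a_j p_j ≤ v. Then there exists a nonpreemptive schedule of all tasks on a single machine of capacity 1, i.e., start times s_j ≥ 0 such that s_j + p_j ≤ 2·max(1, v) for every task j and, for every time t, Σ_{j : s_j ≤ t < s_j + p_j} a_j ≤ 1. -/
open Finset
open scoped Classical

namespace GreedyPack

open List


variable {n : ℕ}

/-- Usage at time `t` of a committed list of `(index, start)` pairs. -/
noncomputable def usageL (a p : Fin n → ℝ) (C : List (Fin n × ℝ)) (t : ℝ) : ℝ :=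
  (C.map (fun c => if c.2 ≤ t ∧ t < c.2 + p c.1 then a c.1 else 0)).sum

lemma usageL_nil (a p : Fin n → ℝ) (t : ℝ) : usageL a p [] t = 0 := rfl

lemma usageL_cons (a p : Fin n → ℝ) (c : Fin n × ℝ) (C : List (Fin n × ℝ)) (t : ℝ) :
    usageL a p (c :: C) t
      = (if c.2 ≤ t ∧ t < c.2 + p c.1 then a c.1 else 0) + usageL a p C t := by
  simp [usageL]

lemma usageL_append (a p : Fin n → ℝ) (C D : List (Fin n × ℝ)) (t : ℝ) :
    usageL a p (C ++ D) t = usageL a p C t + usageL a p D t := by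
  simp [usageL]

lemma usageL_nonneg (a p : Fin n → ℝ) (ha0 : ∀ j, 0 ≤ a j) (C : List (Fin n × ℝ)) (t : ℝ) :
    0 ≤ usageL a p C t := by
  apply List.sum_nonneg
  intro x hx
  obtain ⟨c, _, rfl⟩ := List.mem_map.1 hx
  split <;> simp [ha0]

/-- The time after which all committed tasks are finished. -/
noncomputable def maxEnd (p : Fin n → ℝ) (C : List (Fin n × ℝ)) : ℝ :=
  (C.map (fun c => c.2 + p c.1)).foldr max 0

lemma maxEnd_nonneg (p : Fin n → ℝ) (C : List (Fin n × ℝ)) : 0 ≤ maxEnd p C := by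
  induction C with
  | nil => simp [maxEnd]
  | cons c C ih => simp only [maxEnd, List.map_cons, List.foldr_cons]
                   exact le_max_of_le_right ih

lemma usageL_eq_zero_of_maxEnd_le (a p : Fin n → ℝ) (C : List (Fin n × ℝ)) {t : ℝ}
    (h : maxEnd p C ≤ t) : usageL a p C t = 0 := by
  induction C with
  | nil => rfl
  | cons c C ih =>
    have h1 : c.2 + p c.1 ≤ t := le_trans (le_max_left _ _) h
    have h2 : maxEnd p C ≤ t := le_trans (le_max_right _ _) h
    rw [usageL_cons, ih h2, if_neg (by rintro ⟨_, hlt⟩; linarith), add_zero]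

/-- The set of times from which (forever) the usage stays `≤ θ`. -/
def okSet (a p : Fin n → ℝ) (C : List (Fin n × ℝ)) (θ : ℝ) : Set ℝ :=
  {t | 0 ≤ t ∧ ∀ t', t ≤ t' → usageL a p C t' ≤ θ}

lemma okSet_nonempty (a p : Fin n → ℝ) (C : List (Fin n × ℝ)) {θ : ℝ} (hθ : 0 ≤ θ) :
    (okSet a p C θ).Nonempty := by
  refine ⟨maxEnd p C, maxEnd_nonneg p C, fun t' ht' => ?_⟩
  rw [usageL_eq_zero_of_maxEnd_le a p C ht']
  exact hθ

lemma okSet_bddBelow (a p : Fin n → ℝ) (C : List (Fin n × ℝ)) (θ : ℝ) :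
    BddBelow (okSet a p C θ) := ⟨0, fun _ hx => hx.1⟩

/-- The placement time for a task of size `au`: first time from which usage stays `≤ θ`. -/
noncomputable def tau (a p : Fin n → ℝ) (C : List (Fin n × ℝ)) (θ : ℝ) : ℝ :=
  sInf (okSet a p C θ)

lemma usageL_right_const (a p : Fin n → ℝ) (C : List (Fin n × ℝ)) (t : ℝ) :
    ∃ ε > 0, ∀ x, t ≤ x → x < t + ε → usageL a p C x = usageL a p C t := by
  induction C with
  | nil => exact ⟨1, one_pos, fun _ _ _ => rfl⟩
  | cons c C ih =>
    obtain ⟨ε₂, hε₂, h₂⟩ := ih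
    have hhead : ∃ ε₁ > 0, ∀ x, t ≤ x → x < t + ε₁ →
        ((if c.2 ≤ x ∧ x < c.2 + p c.1 then a c.1 else 0)
          = (if c.2 ≤ t ∧ t < c.2 + p c.1 then a c.1 else 0)) := by
      by_cases h1 : t < c.2
      · refine ⟨c.2 - t, by linarith, fun x hx hx' => ?_⟩
        rw [if_neg (by rintro ⟨hc, _⟩; linarith), if_neg (by rintro ⟨hc, _⟩; linarith)]
      · by_cases h2 : t < c.2 + p c.1
        · refine ⟨c.2 + p c.1 - t, by linarith, fun x hx hx' => ?_⟩
          rw [if_pos ⟨le_trans (not_lt.1 h1) hx, by linarith⟩, if_pos ⟨not_lt.1 h1, h2⟩]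
        · refine ⟨1, one_pos, fun x hx hx' => ?_⟩
          rw [if_neg (by rintro ⟨_, hc⟩; push_neg at h2; linarith),
            if_neg (by rintro ⟨_, hc⟩; exact h2 hc)]
    obtain ⟨ε₁, hε₁, h₁⟩ := hhead
    refine ⟨min ε₁ ε₂, lt_min hε₁ hε₂, fun x hx hx' => ?_⟩
    rw [usageL_cons, usageL_cons,
      h₁ x hx (lt_of_lt_of_le hx' (by simp [min_le_left])),
      h₂ x hx (lt_of_lt_of_le hx' (by simp [min_le_right]))]

lemma tau_nonneg (a p : Fin n → ℝ) (C : List (Fin n × ℝ)) {θ : ℝ} (hθ : 0 ≤ θ) :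
    0 ≤ tau a p C θ :=
  le_csInf (okSet_nonempty a p C hθ) fun _ hx => hx.1

lemma tau_spec (a p : Fin n → ℝ) (C : List (Fin n × ℝ)) {θ : ℝ} (hθ : 0 ≤ θ) :
    ∀ t', tau a p C θ ≤ t' → usageL a p C t' ≤ θ := by
  intro t' ht'
  rcases eq_or_lt_of_le ht' with heq | hlt
  · -- t' = tau : use right-constancy
    obtain ⟨ε, hε, hconst⟩ := usageL_right_const a p C t'
    have h2 : tau a p C θ < t' + ε / 2 := by rw [heq]; linarith
    obtain ⟨x, hx, hxlt⟩ := (csInf_lt_iff (okSet_bddBelow a p C θ)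
      (okSet_nonempty a p C hθ)).1 h2
    have hx2 : usageL a p C (t' + ε / 2) ≤ θ := hx.2 _ (by linarith)
    have : usageL a p C (t' + ε / 2) = usageL a p C t' :=
      hconst _ (by linarith) (by linarith)
    linarith [this ▸ hx2]
  · obtain ⟨x, hx, hxlt⟩ := (csInf_lt_iff (okSet_bddBelow a p C θ)
      (okSet_nonempty a p C hθ)).1 hlt
    exact hx.2 _ hxlt.le

lemma tau_min (a p : Fin n → ℝ) (C : List (Fin n × ℝ)) {θ : ℝ} {t : ℝ}
    (h0 : 0 ≤ t) (hlt : t < tau a p C θ) :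
    ∃ t', t ≤ t' ∧ θ < usageL a p C t' := by
  by_contra h
  push_neg at h
  have : t ∈ okSet a p C θ := ⟨h0, h⟩
  exact absurd (csInf_le (okSet_bddBelow a p C θ) this) (not_le.2 hlt)

/-- Fuel-based iterative placement of the pending tasks. -/
noncomputable def placeF (a p : Fin n → ℝ) :
    ℕ → List (Fin n × ℝ) → List (Fin n) → List (Fin n × ℝ)
  | 0, C, _ => C
  | (k+1), C, P =>
    match P.argmin (fun u => tau a p C (1 - a u)) with
    | none => C
    | some u => placeF a p k (C ++ [(u, tau a p C (1 - a u))]) (P.erase u)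

lemma snd_unique {L : List (Fin n × ℝ)} (hnd : (L.map Prod.fst).Nodup) {x : Fin n} {s₁ s₂ : ℝ}
    (h₁ : (x, s₁) ∈ L) (h₂ : (x, s₂) ∈ L) : s₁ = s₂ := by
  induction L with
  | nil => cases h₁
  | cons c L ih =>
    simp only [List.map_cons, List.nodup_cons] at hnd
    rcases List.mem_cons.1 h₁ with h₁ | h₁ <;> rcases List.mem_cons.1 h₂ with h₂ | h₂
    · rw [← h₂] at h₁; exact (Prod.mk.injEq _ _ _ _ ▸ congrArg id h₁).2.symm ▸ rfl
    · exfalso; exact hnd.1 (List.mem_map.2 ⟨(x, s₂), h₂, by rw [← h₁]⟩)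
    · exfalso; exact hnd.1 (List.mem_map.2 ⟨(x, s₁), h₁, by rw [← h₂]⟩)
    · exact ih hnd.2 h₁ h₂


lemma placeF_spec (a p : Fin n → ℝ) (ha : ∀ j, 0 < a j ∧ a j ≤ 1) (hp : ∀ j, 0 < p j ∧ p j ≤ 1) :
    ∀ (k : ℕ) (P : List (Fin n)) (C : List (Fin n × ℝ)) (m : ℝ),
      P.length ≤ k →
      0 ≤ m →
      (∀ t, usageL a p C t ≤ 1) →
      (∀ t t', m ≤ t → t ≤ t' → usageL a p C t' ≤ usageL a p C t) →
      (∀ u ∈ P, ∀ t, 0 ≤ t → t < m → 1 - a u < usageL a p C t) →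
      (∀ c ∈ C, 0 ≤ c.2) →
      ((C.map Prod.fst ++ P).Nodup) →
      ((placeF a p k C P).map Prod.fst ~ C.map Prod.fst ++ P) ∧
      (∀ c ∈ C, c ∈ placeF a p k C P) ∧
      (∀ t, usageL a p C t ≤ usageL a p (placeF a p k C P) t) ∧
      (∀ t, usageL a p (placeF a p k C P) t ≤ 1) ∧
      (∀ c ∈ placeF a p k C P, 0 ≤ c.2) ∧
      (∀ u ∈ P, ∀ s, (u, s) ∈ placeF a p k C P →
        ∀ t, 0 ≤ t → t < s → 1 - a u < usageL a p (placeF a p k C P) t) := by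
  intro k
  induction k with
  | zero =>
    intro P C m hlen _ hcap _ _ hst _
    have hP : P = [] := List.length_eq_zero_iff.1 (Nat.le_zero.1 hlen)
    subst hP
    exact ⟨by simp [placeF], fun c hc => hc, fun t => le_rfl, hcap, hst,
      fun u hu => absurd hu List.not_mem_nil⟩
  | succ k ih =>
    intro P C m hlen hm hcap hmono hsat hst hnd
    rcases hargmin : P.argmin (fun u => tau a p C (1 - a u)) with _ | u
    · -- P is empty
      have hP : P = [] := List.argmin_eq_none.1 hargmin
      subst hP
      simp only [placeF, hargmin]
      exact ⟨by simp, fun c hc => hc, fun t => le_rfl, hcap, hst,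
        fun u hu => absurd hu List.not_mem_nil⟩
    · have hu : u ∈ P := List.argmin_mem hargmin
      have hθu : (0:ℝ) ≤ 1 - a u := by linarith [(ha u).2]
      set τ := tau a p C (1 - a u) with hτdef
      have hres : placeF a p (k+1) C P = placeF a p k (C ++ [(u, τ)]) (P.erase u) := by
        simp only [placeF, hargmin]
        rfl
      set C' := C ++ [(u, τ)] with hC'def
      -- basic facts about τ
      have hτ0 : 0 ≤ τ := tau_nonneg a p C hθu
      have hτspec : ∀ t', τ ≤ t' → usageL a p C t' ≤ 1 - a u := tau_spec a p C hθu
      have hτm : m ≤ τ := by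
        by_contra hcon
        push_neg at hcon
        have h1 := hsat u hu τ hτ0 hcon
        have h2 := hτspec τ le_rfl
        linarith
      -- pointwise saturation at the new placement
      have hptwise : ∀ t, 0 ≤ t → t < τ → 1 - a u < usageL a p C t := by
        intro t h0 hlt
        by_cases htm : t < m
        · exact hsat u hu t h0 htm
        · push_neg at htm
          obtain ⟨t', htt', hgt⟩ := tau_min a p C h0 hlt
          exact lt_of_lt_of_le hgt (hmono t t' htm htt')
      -- usage of C'
      have husageC' : ∀ t, usageL a p C' t
          = usageL a p C t + (if τ ≤ t ∧ t < τ + p u then a u else 0) := by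
        intro t
        rw [hC'def, usageL_append]
        simp [usageL]
      have husageC'_ge : ∀ t, usageL a p C t ≤ usageL a p C' t := by
        intro t
        rw [husageC' t]
        have : (0:ℝ) ≤ (if τ ≤ t ∧ t < τ + p u then a u else 0) := by
          split <;> simp [le_of_lt (ha u).1]
        linarith
      -- invariants for the recursive call
      have hlen' : (P.erase u).length ≤ k := by
        rw [List.length_erase_of_mem hu]
        omega
      have hcap' : ∀ t, usageL a p C' t ≤ 1 := by
        intro t
        rw [husageC' t]
        by_cases hin : τ ≤ t ∧ t < τ + p u
        · rw [if_pos hin]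
          have := hτspec t hin.1
          linarith
        · rw [if_neg hin, add_zero]; exact hcap t
      have hmono' : ∀ t t', τ ≤ t → t ≤ t' → usageL a p C' t' ≤ usageL a p C' t := by
        intro t t' h1 h2
        rw [husageC' t, husageC' t']
        have hbase := hmono t t' (le_trans hτm h1) h2
        have hterm : (if τ ≤ t' ∧ t' < τ + p u then a u else 0)
            ≤ (if τ ≤ t ∧ t < τ + p u then a u else 0) := by
          by_cases hin : τ ≤ t ∧ t < τ + p u
          · rw [if_pos hin]
            split <;> simp [le_of_lt (ha u).1]
          · rw [if_neg hin]
            rw [if_neg]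
            push_neg at hin
            rintro ⟨hc1, hc2⟩
            exact absurd (by linarith [hin h1] : t' < t') (lt_irrefl t')
        linarith
      have hsat' : ∀ v ∈ P.erase u, ∀ t, 0 ≤ t → t < τ → 1 - a v < usageL a p C' t := by
        intro v hv t h0 hlt
        have hvP : v ∈ P := List.mem_of_mem_erase hv
        by_cases htm : t < m
        · exact lt_of_lt_of_le (hsat v hvP t h0 htm) (husageC'_ge t)
        · push_neg at htm
          have hτv : τ ≤ tau a p C (1 - a v) := List.le_of_mem_argmin (f := fun u => tau a p C (1 - a u)) hvP (Option.mem_def.2 hargmin)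
          obtain ⟨t', htt', hgt⟩ := tau_min a p C h0 (lt_of_lt_of_le hlt hτv)
          exact lt_of_lt_of_le (lt_of_lt_of_le hgt (hmono t t' htm htt')) (husageC'_ge t)
      have hst' : ∀ c ∈ C', 0 ≤ c.2 := by
        intro c hc
        rcases List.mem_append.1 hc with hc | hc
        · exact hst c hc
        · simp only [List.mem_singleton] at hc
          rw [hc]
          exact hτ0
      have hpermP : [u] ++ P.erase u ~ P := (List.perm_cons_erase hu).symm
      have hnd' : ((C'.map Prod.fst ++ P.erase u)).Nodup := by
        have hperm : C'.map Prod.fst ++ P.erase u ~ C.map Prod.fst ++ P := by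
          rw [hC'def, List.map_append]
          calc (C.map Prod.fst ++ [(u, τ)].map Prod.fst) ++ P.erase u
              ~ C.map Prod.fst ++ ([(u, τ)].map Prod.fst ++ P.erase u) := by
                rw [List.append_assoc]
            _ ~ C.map Prod.fst ++ P := List.Perm.append_left _ (by simpa using hpermP)
        exact hperm.nodup_iff.2 hnd
      obtain ⟨ihperm, ihmem, ihge, ihcap, ihst, ihsat⟩ :=
        ih (P.erase u) C' τ hlen' hτ0 hcap' hmono' hsat' hst' hnd'
      rw [hres]
      refine ⟨?_, ?_, ?_, ihcap, ihst, ?_⟩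
      · -- permutation
        calc (placeF a p k C' (P.erase u)).map Prod.fst
            ~ C'.map Prod.fst ++ P.erase u := ihperm
          _ ~ C.map Prod.fst ++ P := by
              rw [hC'def, List.map_append, List.append_assoc]
              exact List.Perm.append_left _ (by simpa using hpermP)
      · intro c hc
        exact ihmem c (List.mem_append.2 (Or.inl hc))
      · intro t
        exact le_trans (husageC'_ge t) (ihge t)
      · -- saturation
        intro v hv s hvs t h0 hts
        by_cases hveq : v = u
        · subst hveq
          have hndres : ((placeF a p k C' (P.erase v)).map Prod.fst).Nodup := by
            apply ihperm.nodup_iff.2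
            exact hnd'
          have hmem2 : (v, τ) ∈ placeF a p k C' (P.erase v) :=
            ihmem (v, τ) (List.mem_append.2 (Or.inr (by simp)))
          have hseq : s = τ := snd_unique hndres hvs hmem2
          rw [hseq] at hts
          exact lt_of_lt_of_le (hptwise t h0 hts)
            (le_trans (husageC'_ge t) (ihge t))
        · have hvP' : v ∈ P.erase u := (List.mem_erase_of_ne hveq).2 hv
          exact ihsat v hvP' s hvs t h0 hts

/-- Sequential placement of a list of tasks starting at time `T`. -/
def seqPlace (p : Fin n → ℝ) : ℝ → List (Fin n) → List (Fin n × ℝ)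
  | _, [] => []
  | T, i :: l => (i, T) :: seqPlace p (T + p i) l

lemma seqPlace_fst (p : Fin n → ℝ) (T : ℝ) (l : List (Fin n)) :
    (seqPlace p T l).map Prod.fst = l := by
  induction l generalizing T with
  | nil => rfl
  | cons i l ih => simp [seqPlace, ih]

lemma seqPlace_mem (p : Fin n → ℝ) (hp0 : ∀ j, 0 ≤ p j) {T : ℝ} {l : List (Fin n)}
    {i : Fin n} {s : ℝ} (h : (i, s) ∈ seqPlace p T l) :
    T ≤ s ∧ s + p i ≤ T + (l.map p).sum := by
  induction l generalizing T with
  | nil => cases h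
  | cons j l ih =>
    rcases List.mem_cons.1 h with h | h
    · have h1 : j = i ∧ T = s := by
        constructor
        · exact congrArg Prod.fst h.symm
        · exact congrArg Prod.snd h.symm
      obtain ⟨rfl, rfl⟩ := h1
      refine ⟨le_rfl, ?_⟩
      have : 0 ≤ (l.map p).sum := List.sum_nonneg (by
        intro x hx; obtain ⟨c, _, rfl⟩ := List.mem_map.1 hx; exact hp0 c)
      simp only [List.map_cons, List.sum_cons]
      linarith
    · obtain ⟨h1, h2⟩ := ih h
      have : 0 ≤ p j := hp0 j
      refine ⟨by linarith, ?_⟩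
      simp only [List.map_cons, List.sum_cons]
      linarith

lemma seqPlace_usage_zero (a p : Fin n → ℝ) (hp0 : ∀ j, 0 ≤ p j) {T t : ℝ}
    (l : List (Fin n)) (h : t < T) : usageL a p (seqPlace p T l) t = 0 := by
  induction l generalizing T with
  | nil => rfl
  | cons i l ih =>
    rw [seqPlace, usageL_cons, if_neg (by rintro ⟨hc, _⟩; exact absurd h (not_lt.2 hc)),
      zero_add]
    exact ih (lt_of_lt_of_le h (by linarith [hp0 i]))

lemma seqPlace_usage_le (a p : Fin n → ℝ) (hp0 : ∀ j, 0 ≤ p j) {b : ℝ} (hb : 0 ≤ b)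
    {l : List (Fin n)} (hab : ∀ j ∈ l, a j ≤ b) (T t : ℝ) :
    usageL a p (seqPlace p T l) t ≤ b := by
  induction l generalizing T with
  | nil => simpa [seqPlace, usageL_nil] using hb
  | cons i l ih =>
    rw [seqPlace, usageL_cons]
    by_cases hc : t < T + p i
    · rw [seqPlace_usage_zero a p hp0 l hc, add_zero]
      split
      · exact hab i List.mem_cons_self
      · exact hb
    · rw [if_neg (by rintro ⟨_, h⟩; exact hc h), zero_add]
      exact ih (fun j hj => hab j (List.mem_cons_of_mem _ hj)) (T + p i)

lemma seqPlace_nonincr (a p : Fin n → ℝ) (ha0 : ∀ j, 0 ≤ a j) (hp0 : ∀ j, 0 ≤ p j)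
    {l : List (Fin n)} (hs : l.Pairwise (fun i j => a j ≤ a i)) :
    ∀ T t t', T ≤ t → t ≤ t' →
      usageL a p (seqPlace p T l) t' ≤ usageL a p (seqPlace p T l) t := by
  induction l with
  | nil => intro T t t' _ _; simp [seqPlace, usageL_nil]
  | cons i l ih =>
    intro T t t' hTt htt'
    have hhead : ∀ j ∈ l, a j ≤ a i := (List.pairwise_cons.1 hs).1
    have htail := (List.pairwise_cons.1 hs).2
    by_cases hc : t < T + p i
    · have h1 : usageL a p (seqPlace p T (i :: l)) t = a i := by
        rw [seqPlace, usageL_cons, if_pos ⟨hTt, hc⟩,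
          seqPlace_usage_zero a p hp0 l hc, add_zero]
      rw [h1]
      refine seqPlace_usage_le a p hp0 (ha0 i) (fun j hj => ?_) T t'
      rcases List.mem_cons.1 hj with rfl | hj
      · exact le_rfl
      · exact hhead j hj
    · push_neg at hc
      have hterm : ∀ x, T + p i ≤ x →
          usageL a p (seqPlace p T (i :: l)) x
            = usageL a p (seqPlace p (T + p i) l) x := by
        intro x hx
        rw [seqPlace, usageL_cons, if_neg (by rintro ⟨_, h⟩; linarith), zero_add]
      rw [hterm t hc, hterm t' (le_trans hc htt')]
      exact ih htail (T + p i) t t' hc htt'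

open MeasureTheory in
lemma volume_bound (a p : Fin n → ℝ) (ha : ∀ j, 0 < a j ∧ a j ≤ 1)
    (hp : ∀ j, 0 < p j ∧ p j ≤ 1) (s : Fin n → ℝ) (hs0 : ∀ j, 0 ≤ s j) (u : Fin n)
    (hsat : ∀ t, 0 ≤ t → t < s u →
      1 - a u ≤ ∑ i, (if s i ≤ t ∧ t < s i + p i then a i else 0)) :
    (1 - a u) * s u + a u * p u ≤ ∑ i, a i * p i := by
  set F : Fin n → ℝ → ℝ :=
    fun i => Set.indicator (Set.Ico (s i) (s i + p i)) (fun _ => a i) with hFdef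
  have hFi_eq : ∀ i t, F i t = if s i ≤ t ∧ t < s i + p i then a i else 0 := by
    intro i t
    simp [hFdef, Set.indicator_apply, Set.mem_Ico]
  have hFnonneg : ∀ i t, 0 ≤ F i t := by
    intro i t
    exact Set.indicator_nonneg (fun _ _ => (ha i).1.le) t
  have hInt : ∀ i, Integrable (F i) volume := by
    intro i
    refine (integrable_indicator_iff measurableSet_Ico).2 ?_
    refine integrableOn_const ?_
    rw [Real.volume_Ico]
    exact ENNReal.ofReal_ne_top
  have hIntSum : Integrable (fun t => ∑ i, F i t) volume :=
    integrable_finset_sum _ (fun i _ => hInt i)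
  -- lower bound for the interval integral of the sum
  set G : ℝ → ℝ := Set.indicator (Set.Ico (0:ℝ) (s u)) (fun _ => 1 - a u) with hGdef
  have hGInt : Integrable G volume := by
    refine (integrable_indicator_iff measurableSet_Ico).2 ?_
    refine integrableOn_const ?_
    rw [Real.volume_Ico]
    exact ENNReal.ofReal_ne_top
  have hmono : ∫ t in (0:ℝ)..(s u), G t ≤ ∫ t in (0:ℝ)..(s u), (∑ i, F i t) := by
    refine intervalIntegral.integral_mono_on (hs0 u) hGInt.intervalIntegrable
      hIntSum.intervalIntegrable ?_
    intro x hx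
    by_cases hxu : x < s u
    · have hGx : G x = 1 - a u := by
        rw [hGdef, Set.indicator_of_mem (Set.mem_Ico.2 ⟨hx.1, hxu⟩)]
      rw [hGx]
      calc 1 - a u ≤ ∑ i, (if s i ≤ x ∧ x < s i + p i then a i else 0) :=
            hsat x hx.1 hxu
        _ = ∑ i, F i x := by
            refine Finset.sum_congr rfl (fun i _ => ?_)
            rw [hFi_eq]
    · have hGx : G x = 0 := by
        rw [hGdef, Set.indicator_of_notMem (by rw [Set.mem_Ico]; tauto)]
      rw [hGx]
      exact Finset.sum_nonneg (fun i _ => hFnonneg i x)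
  have hGval : ∫ t in (0:ℝ)..(s u), G t = (1 - a u) * s u := by
    rw [intervalIntegral.integral_of_le (hs0 u), hGdef,
      setIntegral_indicator measurableSet_Ico]
    have hset : Set.Ioc (0:ℝ) (s u) ∩ Set.Ico (0:ℝ) (s u) = Set.Ioo (0:ℝ) (s u) := by
      ext x
      simp only [Set.mem_inter_iff, Set.mem_Ioc, Set.mem_Ico, Set.mem_Ioo]
      constructor
      · rintro ⟨⟨h1, _⟩, ⟨_, h4⟩⟩; exact ⟨h1, h4⟩
      · rintro ⟨h1, h2⟩; exact ⟨⟨h1, h2.le⟩, ⟨h1.le, h2⟩⟩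
    rw [hset, setIntegral_const, Real.volume_real_Ioo_of_le (hs0 u), sub_zero,
      smul_eq_mul, mul_comm]
  -- upper bound: split the sum
  have hsplit : ∫ t in (0:ℝ)..(s u), (∑ i, F i t)
      = ∑ i, ∫ t in (0:ℝ)..(s u), F i t :=
    intervalIntegral.integral_finset_sum (fun i _ => (hInt i).intervalIntegrable)
  have hu_zero : ∫ t in (0:ℝ)..(s u), F u t = 0 := by
    rw [intervalIntegral.integral_of_le (hs0 u), hFdef,
      setIntegral_indicator measurableSet_Ico, setIntegral_const, smul_eq_mul]
    have hsub : Set.Ioc (0:ℝ) (s u) ∩ Set.Ico (s u) (s u + p u) ⊆ {s u} := by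
      intro x hx
      simp only [Set.mem_inter_iff, Set.mem_Ioc, Set.mem_Ico] at hx
      simp [le_antisymm hx.1.2 hx.2.1]
    rw [measureReal_def, measure_mono_null hsub Real.volume_singleton]
    simp
  have hi_le : ∀ i, i ≠ u → ∫ t in (0:ℝ)..(s u), F i t ≤ a i * p i := by
    intro i _
    rw [intervalIntegral.integral_of_le (hs0 u)]
    calc ∫ t in Set.Ioc (0:ℝ) (s u), F i t
        ≤ ∫ t, F i t := setIntegral_le_integral (hInt i) (ae_of_all _ (hFnonneg i))
      _ = a i * p i := by
          rw [hFdef, integral_indicator_const _ measurableSet_Ico, Real.volume_real_Ico_of_le (by linarith [(hp i).1]),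
            smul_eq_mul, add_sub_cancel_left,
            mul_comm]
  have hsum_le : ∑ i, ∫ t in (0:ℝ)..(s u), F i t ≤ (∑ i, a i * p i) - a u * p u := by
    have h1 : ∑ i, ∫ t in (0:ℝ)..(s u), F i t
        ≤ ∑ i, (if i = u then 0 else a i * p i) := by
      refine Finset.sum_le_sum (fun i _ => ?_)
      by_cases hiu : i = u
      · rw [if_pos hiu, hiu, hu_zero]
      · rw [if_neg hiu]; exact hi_le i hiu
    have h2 : ∑ i, (if i = u then 0 else a i * p i)
        = (∑ i, a i * p i) - a u * p u := by
      have h3 : ∀ i : Fin n, (if i = u then 0 else a i * p i)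
          = a i * p i - (if i = u then a i * p i else 0) := by
        intro i; by_cases hiu : i = u <;> simp [hiu]
      rw [Finset.sum_congr rfl (fun i _ => h3 i), Finset.sum_sub_distrib,
        Finset.sum_ite_eq' Finset.univ u (fun i => a i * p i), if_pos (Finset.mem_univ u)]
    linarith
  have := hGval ▸ hmono
  rw [hsplit] at this
  linarith [le_trans this hsum_le]

lemma filter_map_sum {α : Type*} (l : List α) (q : α → Bool) (f : α → ℝ) :
    ((l.filter q).map f).sum = (l.map (fun i => if q i then f i else 0)).sum := by
  induction l with
  | nil => rfl
  | cons x l ih =>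
    by_cases hx : q x
    · simp [List.filter_cons, hx, ih]
    · simp [List.filter_cons, hx, ih]

/-- Extract the start time of task `i` from the schedule list. -/
noncomputable def startOf (R : List (Fin n × ℝ)) (i : Fin n) : ℝ :=
  (R.map (fun c => if c.1 = i then c.2 else 0)).sum

lemma startOf_eq {R : List (Fin n × ℝ)} (hnd : (R.map Prod.fst).Nodup) {i : Fin n} {σ : ℝ}
    (h : (i, σ) ∈ R) : startOf R i = σ := by
  induction R with
  | nil => cases h
  | cons c R ih =>
    simp only [List.map_cons, List.nodup_cons] at hnd
    rcases List.mem_cons.1 h with h | h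
    · have hc1 : c.1 = i := by rw [← h]
      have hc2 : c.2 = σ := by rw [← h]
      have hz : ∀ x ∈ R.map (fun c => if c.1 = i then c.2 else 0), x = 0 := by
        intro x hx
        obtain ⟨d, hd, rfl⟩ := List.mem_map.1 hx
        rw [if_neg]
        intro hdi
        exact hnd.1 (by rw [hc1, ← hdi]; exact List.mem_map.2 ⟨d, hd, rfl⟩)
      rw [startOf, List.map_cons, List.sum_cons, if_pos hc1, List.sum_eq_zero hz,
        add_zero, hc2]
    · have hc1 : c.1 ≠ i := by
        intro hcontra
        exact hnd.1 (by rw [hcontra]; exact List.mem_map.2 ⟨(i, σ), h, rfl⟩)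
      rw [startOf, List.map_cons, List.sum_cons, if_neg hc1, zero_add]
      exact ih hnd.2 h

end GreedyPack

/-- Greedy packing bound (Lemma 8): tasks with sizes `a_j ∈ (0,1]`, processing times
`p_j ∈ (0,1]` and total volume at most `v` admit a nonpreemptive schedule on a single machine of
capacity 1 finishing by time `2·max(1, v)`. -/
theorem greedy_packing_within_twice_volume
    (v : ℝ) (hv : 0 < v) (n : ℕ)
    (a p : Fin n → ℝ)
    (ha : ∀ j, a j ∈ Set.Ioc (0 : ℝ) 1)
    (hp : ∀ j, p j ∈ Set.Ioc (0 : ℝ) 1)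
    (hvol : ∑ j, a j * p j ≤ v) :
    ∃ s : Fin n → ℝ,
      (∀ j, 0 ≤ s j) ∧
      (∀ j, s j + p j ≤ 2 * max 1 v) ∧
      (∀ t : ℝ, ∑ j ∈ Finset.univ.filter (fun j => s j ≤ t ∧ t < s j + p j), a j ≤ 1) := by
  classical
  have ha' : ∀ j, 0 < a j ∧ a j ≤ 1 := fun j => ⟨(ha j).1, (ha j).2⟩
  have hp' : ∀ j, 0 < p j ∧ p j ≤ 1 := fun j => ⟨(hp j).1, (hp j).2⟩
  have ha0 : ∀ j, 0 ≤ a j := fun j => (ha' j).1.le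
  have hp0 : ∀ j, 0 ≤ p j := fun j => (hp' j).1.le
  set bigQ : Fin n → Bool := fun i => decide ((1:ℝ)/2 < a i) with hbigQ
  set bigsL := (List.finRange n).filter bigQ with hbigsL
  set smallsL := (List.finRange n).filter (fun i => !bigQ i) with hsmallsL
  set r : Fin n → Fin n → Prop := fun i j => a j ≤ a i with hrdef
  haveI : DecidableRel r := fun i j => Classical.propDecidable _
  haveI : IsTotal (Fin n) r := ⟨fun i j => le_total (a j) (a i)⟩
  haveI : IsTrans (Fin n) r := ⟨fun i j k h1 h2 => le_trans h2 h1⟩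
  set bigsS := List.insertionSort r bigsL with hbigsS
  have hsortperm : List.Perm bigsS bigsL := List.perm_insertionSort r bigsL
  have hsorted : bigsS.Pairwise r := List.pairwise_insertionSort r bigsL
  set C0 := GreedyPack.seqPlace p 0 bigsS with hC0
  have hC0fst : C0.map Prod.fst = bigsS := GreedyPack.seqPlace_fst p 0 bigsS
  have hcap0 : ∀ t, GreedyPack.usageL a p C0 t ≤ 1 :=
    fun t => GreedyPack.seqPlace_usage_le a p hp0 zero_le_one (fun j _ => (ha' j).2) 0 t
  have hmono0 : ∀ t t', (0:ℝ) ≤ t → t ≤ t' →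
      GreedyPack.usageL a p C0 t' ≤ GreedyPack.usageL a p C0 t :=
    fun t t' h1 h2 => GreedyPack.seqPlace_nonincr a p ha0 hp0 hsorted 0 t t' h1 h2
  have hst0 : ∀ c ∈ C0, 0 ≤ c.2 := by
    intro c hc
    exact (GreedyPack.seqPlace_mem p hp0 (show ((c.1 : Fin n), (c.2 : ℝ)) ∈ C0 from hc)).1
  have hpermfin : List.Perm ((C0.map Prod.fst) ++ smallsL) (List.finRange n) := by
    rw [hC0fst]
    exact (hsortperm.append_right _).trans (List.filter_append_perm _ _)
  have hnd0 : ((C0.map Prod.fst) ++ smallsL).Nodup :=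
    hpermfin.nodup_iff.2 (List.nodup_finRange n)
  set R := GreedyPack.placeF a p smallsL.length C0 smallsL with hR
  obtain ⟨hperm, hmem, hge, hcap, hstR, hsatR⟩ :=
    GreedyPack.placeF_spec a p ha' hp' smallsL.length smallsL C0 0 le_rfl le_rfl
      hcap0 hmono0 (fun u _ t h0 hlt => absurd hlt (not_lt.2 h0)) hst0 hnd0
  have hRfin : List.Perm (R.map Prod.fst) (List.finRange n) := hperm.trans hpermfin
  have hndR : (R.map Prod.fst).Nodup := hRfin.nodup_iff.2 (List.nodup_finRange n)
  set s : Fin n → ℝ := fun i => GreedyPack.startOf R i with hs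
  have hentry : ∀ i, (i, s i) ∈ R := by
    intro i
    have hi : i ∈ R.map Prod.fst := hRfin.mem_iff.2 (List.mem_finRange i)
    obtain ⟨c, hc, hci⟩ := List.mem_map.1 hi
    have hic : (i, c.2) ∈ R := by
      have : c = (i, c.2) := by rw [← hci]
      rw [← this]; exact hc
    have hval : s i = c.2 := GreedyPack.startOf_eq hndR hic
    rw [hval]; exact hic
  have hs0 : ∀ i, 0 ≤ s i := fun i => hstR (i, s i) (hentry i)
  have husage : ∀ t, GreedyPack.usageL a p R t
      = ∑ i, (if s i ≤ t ∧ t < s i + p i then a i else 0) := by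
    intro t
    rw [GreedyPack.usageL, Fin.sum_univ_def]
    have hmapeq : R.map (fun c => if c.2 ≤ t ∧ t < c.2 + p c.1 then a c.1 else 0)
        = R.map ((fun i => if s i ≤ t ∧ t < s i + p i then a i else 0) ∘ Prod.fst) := by
      refine List.map_congr_left (fun c hc => ?_)
      have hcs : s c.1 = c.2 :=
        GreedyPack.startOf_eq hndR (show ((c.1 : Fin n), (c.2 : ℝ)) ∈ R from hc)
      simp only [Function.comp_apply, hcs]
    rw [hmapeq, ← List.map_map]
    exact ((hRfin.map _).sum_eq)
  refine ⟨s, hs0, ?_, ?_⟩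
  · -- makespan bounds
    intro j
    set V := ∑ i, a i * p i with hV
    have hM1 : (1:ℝ) ≤ max 1 v := le_max_left _ _
    have hMv : v ≤ max 1 v := le_max_right _ _
    have hVM : V ≤ max 1 v := le_trans hvol hMv
    by_cases hbig : (1:ℝ)/2 < a j
    · -- big task: from the sequential phase
      have hjbig : j ∈ bigsL :=
        List.mem_filter.2 ⟨List.mem_finRange j, by simp only [hbigQ, decide_eq_true_eq]; exact hbig⟩
      have hjS : j ∈ C0.map Prod.fst := by
        rw [hC0fst]; exact hsortperm.mem_iff.2 hjbig
      obtain ⟨c, hc, hci⟩ := List.mem_map.1 hjS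
      have hcC0 : (j, c.2) ∈ C0 := by
        have : c = (j, c.2) := by rw [← hci]
        rw [← this]; exact hc
      have hcR : (j, c.2) ∈ R := hmem _ hcC0
      have hsj : s j = c.2 := GreedyPack.startOf_eq hndR hcR
      obtain ⟨h1, h2⟩ := GreedyPack.seqPlace_mem p hp0 hcC0
      have hsum1 : (bigsS.map p).sum = (bigsL.map p).sum := (hsortperm.map p).sum_eq
      have hsum2 : (bigsL.map p).sum ≤ 2 * V := by
        rw [hbigsL, GreedyPack.filter_map_sum, ← Fin.sum_univ_def]
        have hterm : ∀ i : Fin n, (if bigQ i then p i else 0) ≤ 2 * (a i * p i) := by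
          intro i
          by_cases hbq : bigQ i = true
          · rw [if_pos hbq]
            have hai : (1:ℝ)/2 < a i := of_decide_eq_true hbq
            nlinarith [(hp' i).1]
          · rw [if_neg hbq]
            nlinarith [(hp' i).1, (ha' i).1]
        calc ∑ i, (if bigQ i then p i else 0) ≤ ∑ i, 2 * (a i * p i) :=
              Finset.sum_le_sum (fun i _ => hterm i)
          _ = 2 * V := by rw [← Finset.mul_sum]
      have hfin : s j + p j ≤ 2 * V := by
        rw [hsj]
        have := h2
        rw [zero_add] at this
        linarith [hsum1 ▸ this]
      linarith
    · -- small task: saturation + volume bound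
      push_neg at hbig
      have hjsm : j ∈ smallsL := by
        refine List.mem_filter.2 ⟨List.mem_finRange j, ?_⟩
        simp only [hbigQ, Bool.not_eq_true', decide_eq_false_iff_not]
        exact not_lt.2 hbig
      have hsat : ∀ t, 0 ≤ t → t < s j → 1 - a j < GreedyPack.usageL a p R t :=
        hsatR j hjsm (s j) (hentry j)
      have hsat' : ∀ t, 0 ≤ t → t < s j →
          1 - a j ≤ ∑ i, (if s i ≤ t ∧ t < s i + p i then a i else 0) := by
        intro t h0 hlt
        rw [← husage t]
        exact (hsat t h0 hlt).le
      have hkey : (1 - a j) * s j + a j * p j ≤ V :=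
        GreedyPack.volume_bound a p ha' hp' s hs0 j hsat'
      have hpos : (0:ℝ) < 1 - a j := by linarith
      have hq : (1 - a j) * (s j + p j) ≤ (2 * max 1 v) * (1 - a j) := by
        nlinarith [(hp' j).2, (hp' j).1, hM1, hVM, hs0 j]
      nlinarith [hq, hpos]
  · -- capacity
    intro t
    rw [Finset.sum_filter, ← husage t]
    exact hcap t
end

section
/- For every ζ > 0 there exist finitely many tasks with sizes a_j ∈ (0,1], processing times p_j ∈ (0,1], and total volume Σ_j a_j p_j ≤ 1, such that every nonpreemptive schedule of these tasks on a single machine of capacity 1 (start times s_j ≥ 0 with Σ_{j : s_j ≤ t < s_j + p_j} a_j ≤ 1 for every time t) has makespan greater than 2 − ζ, i.e., max_j (s_j + p_j) > 2 − ζ. -/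
open Finset
open scoped Classical

/-- Tightness of the greedy packing bound (Lemma 9): for every `ζ > 0` there is a finite list of
tasks with sizes and processing times in `(0,1]` and total volume at most 1 such that every
nonpreemptive schedule on a single machine of capacity 1 has makespan greater than `2 - ζ`. -/
theorem greedy_packing_bound_tight
    (ζ : ℝ) (hζ : 0 < ζ) :
    ∃ (n : ℕ) (a p : Fin n → ℝ),
      (∀ j, a j ∈ Set.Ioc (0 : ℝ) 1) ∧
      (∀ j, p j ∈ Set.Ioc (0 : ℝ) 1) ∧
      (∑ j, a j * p j ≤ 1) ∧
      ∀ s : Fin n → ℝ,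
        (∀ j, 0 ≤ s j) →
        (∀ t : ℝ, ∑ j ∈ Finset.univ.filter (fun j => s j ≤ t ∧ t < s j + p j), a j ≤ 1) →
        ∃ j, 2 - ζ < s j + p j := by
  obtain ⟨m, hm⟩ : ∃ m : ℕ, ((1:ℝ)/2)^m < ζ/2 :=
    exists_pow_lt_of_lt_one (by positivity) (by norm_num)
  set n : ℕ := m + 1 with hn'
  have hn : ((1:ℝ)/2)^n < ζ/2 :=
    lt_of_le_of_lt (pow_le_pow_of_le_one (by norm_num) (by norm_num) (by omega)) hm
  set ε : ℝ := ((1:ℝ)/2)^n with hε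
  have hε0 : 0 < ε := by positivity
  have hε1 : ε ≤ 1 := pow_le_one₀ (by norm_num) (by norm_num)
  refine ⟨n, fun _ => 1/2 + ε/2, fun j => ((1:ℝ)/2)^(j:ℕ), ?_, ?_, ?_, ?_⟩
  · intro j; constructor <;> [positivity; linarith]
  · intro j
    exact ⟨by positivity, pow_le_one₀ (by norm_num) (by norm_num)⟩
  · have hsum : ∑ j : Fin n, ((1:ℝ)/2)^(j:ℕ) = 2 - 2*ε := by
      rw [Fin.sum_univ_eq_sum_range, geom_sum_eq (by norm_num)]
      rw [hε]; ring
    rw [← Finset.mul_sum, hsum]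
    nlinarith
  · intro s hs0 hcap
    have hsum : ∑ j : Fin n, ((1:ℝ)/2)^(j:ℕ) = 2 - 2*ε := by
      rw [Fin.sum_univ_eq_sum_range, geom_sum_eq (by norm_num)]
      rw [hε]; ring
    have hnpos : 0 < n := by omega
    haveI : Nonempty (Fin n) := ⟨⟨0, hnpos⟩⟩
    obtain ⟨j₀, _, hj₀⟩ := Finset.exists_max_image (Finset.univ : Finset (Fin n))
      (fun j => s j + ((1:ℝ)/2)^(j:ℕ)) ⟨Classical.arbitrary _, Finset.mem_univ _⟩
    refine ⟨j₀, ?_⟩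
    set M : ℝ := s j₀ + ((1:ℝ)/2)^(j₀:ℕ) with hM
    -- intervals are pairwise disjoint
    have hdisj : (↑(Finset.univ : Finset (Fin n)) : Set (Fin n)).PairwiseDisjoint
        (fun j => Set.Ico (s j) (s j + ((1:ℝ)/2)^(j:ℕ))) := by
      intro j _ k _ hjk
      simp only [Function.onFun]
      rw [Set.disjoint_left]
      intro t htj htk
      have hsub : ({j, k} : Finset (Fin n)) ⊆
          Finset.univ.filter (fun i => s i ≤ t ∧ t < s i + ((1:ℝ)/2)^(i:ℕ)) := by
        intro i hi
        simp only [Finset.mem_insert, Finset.mem_singleton] at hi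
        rcases hi with rfl | rfl
        · exact Finset.mem_filter.mpr ⟨Finset.mem_univ _, htj.1, htj.2⟩
        · exact Finset.mem_filter.mpr ⟨Finset.mem_univ _, htk.1, htk.2⟩
      have hle : ∑ i ∈ ({j, k} : Finset (Fin n)), (1/2 + ε/2) ≤
          ∑ i ∈ Finset.univ.filter (fun i => s i ≤ t ∧ t < s i + ((1:ℝ)/2)^(i:ℕ)),
            (1/2 + ε/2) :=
        Finset.sum_le_sum_of_subset_of_nonneg hsub (fun _ _ _ => by positivity)
      have hcard : ∑ i ∈ ({j, k} : Finset (Fin n)), (1/2 + ε/2) = 1 + ε := by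
        rw [Finset.sum_const, Finset.card_insert_of_notMem (by simpa using hjk),
          Finset.card_singleton]
        push_cast; ring
      have := hcap t
      rw [hcard] at hle
      linarith
    have hmeas := MeasureTheory.measure_biUnion_finset (μ := MeasureTheory.volume) hdisj
      (fun j _ => measurableSet_Ico (a := s j) (b := s j + ((1:ℝ)/2)^(j:ℕ)))
    have hsubM : (⋃ j ∈ (Finset.univ : Finset (Fin n)),
        Set.Ico (s j) (s j + ((1:ℝ)/2)^(j:ℕ))) ⊆ Set.Ico 0 M := by
      intro t ht
      simp only [Set.mem_iUnion, Set.mem_Ico] at ht ⊢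
      obtain ⟨j, _, htj1, htj2⟩ := ht
      exact ⟨le_trans (hs0 j) htj1, lt_of_lt_of_le htj2 (hj₀ j (Finset.mem_univ j))⟩
    have hMnn : 0 ≤ M := le_trans (hs0 j₀) (le_add_of_nonneg_right (by positivity))
    have hvol : ∀ j : Fin n, MeasureTheory.volume
        (Set.Ico (s j) (s j + ((1:ℝ)/2)^(j:ℕ))) = ENNReal.ofReal (((1:ℝ)/2)^(j:ℕ)) := by
      intro j; rw [Real.volume_Ico]; congr 1; ring
    have hkey : ENNReal.ofReal (2 - 2*ε) ≤ ENNReal.ofReal M := by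
      calc ENNReal.ofReal (2 - 2*ε)
          = ∑ j : Fin n, ENNReal.ofReal (((1:ℝ)/2)^(j:ℕ)) := by
            rw [← hsum, ENNReal.ofReal_sum_of_nonneg (fun j _ => by positivity)]
        _ = ∑ j : Fin n, MeasureTheory.volume
              (Set.Ico (s j) (s j + ((1:ℝ)/2)^(j:ℕ))) := by
            simp_rw [hvol]
        _ = MeasureTheory.volume (⋃ j ∈ (Finset.univ : Finset (Fin n)),
              Set.Ico (s j) (s j + ((1:ℝ)/2)^(j:ℕ))) := hmeas.symm
        _ ≤ MeasureTheory.volume (Set.Ico 0 M) := MeasureTheory.measure_mono hsubM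
        _ = ENNReal.ofReal M := by rw [Real.volume_Ico, sub_zero]
    have h2 : 2 - 2*ε ≤ M := by
      by_cases h : 2 - 2*ε ≤ 0
      · linarith
      · exact (ENNReal.ofReal_le_ofReal_iff hMnn).mp hkey
    have : 2 - ζ < 2 - 2*ε := by rw [hε] at *; linarith
    linarith
end

section
/- Suppose the optimal solution of (LP2) satisfies x_{j0} = 0 for every job j. Then there exists a valid nonpreemptive schedule without migration whose weighted sum of job completion times is at most 24 times the minimum of Σ_j w_j C_j over all valid preemptive schedules without migration. In particular, SynchPack-2 is a 24-approximation algorithm for parallel-task job scheduling with packing and placement constraints when preemption (within a single machine) is allowed but migration is not. -/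
open Finset MeasureTheory
open scoped Classical

set_option linter.unusedSectionVars false

namespace SP24

structure Dat (M : ℕ) (Task : Type) where
  cap : Fin M → ℝ
  a : Task → ℝ
  mach : Task → Fin M
  P : Task → ℕ
  c : Task → ℕ
  ord : Task → ℕ

namespace Dat

variable {M : ℕ} {Task : Type} [Fintype Task] (D : Dat M Task)

noncomputable def lc (k : Task) : ℕ := Nat.clog 2 (D.c k)
noncomputable def mc (k : Task) : ℕ := Nat.clog 2 (D.P k)
def big (k : Task) : Prop := D.cap (D.mach k) < 2 * D.a k
noncomputable def cls (i : Fin M) (l m : ℕ) : Finset Task :=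
  Finset.univ.filter fun k => D.mach k = i ∧ D.lc k = l ∧ D.mc k = m
noncomputable def smalls (i : Fin M) (l m : ℕ) : Finset Task :=
  (D.cls i l m).filter fun k => ¬ D.big k
noncomputable def B (i : Fin M) (l m : ℕ) : ℕ := ((D.cls i l m).filter D.big).card
noncomputable def Atot (i : Fin M) (l m : ℕ) : ℝ := ∑ k ∈ D.smalls i l m, D.a k
noncomputable def Apre (k : Task) : ℝ :=
  ∑ k' ∈ (D.smalls (D.mach k) (D.lc k) (D.mc k)).filter (fun k' => D.ord k' < D.ord k), D.a k'
noncomputable def Fh (i : Fin M) (l m : ℕ) : ℕ := ⌊2 * D.Atot i l m / D.cap i⌋₊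
noncomputable def Nsh (i : Fin M) (l m : ℕ) : ℕ := D.B i l m + D.Fh i l m + 1
noncomputable def woff (i : Fin M) (l m : ℕ) : ℝ := ∑ m' ∈ Finset.range m, (D.Nsh i l m' : ℝ) * 2 ^ m'
noncomputable def Len (i : Fin M) (l : ℕ) : ℝ := D.woff i l (l + 1)
noncomputable def stt (i : Fin M) (l : ℕ) : ℝ := ∑ l' ∈ Finset.range l, D.Len i l'
noncomputable def q (k : Task) : ℕ :=
  if D.big k then
    ((D.cls (D.mach k) (D.lc k) (D.mc k)).filter (fun k' => D.big k' ∧ D.ord k' < D.ord k)).card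
  else D.B (D.mach k) (D.lc k) (D.mc k) + ⌊2 * D.Apre k / D.cap (D.mach k)⌋₊
noncomputable def s (k : Task) : ℝ :=
  D.stt (D.mach k) (D.lc k) + D.woff (D.mach k) (D.lc k) (D.mc k) + (D.q k : ℝ) * 2 ^ (D.mc k)

lemma woff_nonneg (i : Fin M) (l : ℕ) (m : ℕ) : 0 ≤ D.woff i l m :=
  Finset.sum_nonneg fun m' _ => by positivity

lemma Len_nonneg (i : Fin M) (l : ℕ) : 0 ≤ D.Len i l := D.woff_nonneg i l (l+1)

lemma stt_nonneg (i : Fin M) (l : ℕ) : 0 ≤ D.stt i l :=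
  Finset.sum_nonneg fun _ _ => D.Len_nonneg i _

lemma s_nonneg (k : Task) : 0 ≤ D.s k := by
  have := D.stt_nonneg (D.mach k) (D.lc k)
  have := D.woff_nonneg (D.mach k) (D.lc k) (D.mc k)
  have : (0:ℝ) ≤ (D.q k : ℝ) * 2 ^ (D.mc k) := by positivity
  unfold s; linarith [D.stt_nonneg (D.mach k) (D.lc k), D.woff_nonneg (D.mach k) (D.lc k) (D.mc k)]

lemma woff_mono (i : Fin M) (l : ℕ) {m m' : ℕ} (h : m ≤ m') : D.woff i l m ≤ D.woff i l m' := by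
  unfold woff
  exact Finset.sum_le_sum_of_subset_of_nonneg (Finset.range_subset_range.2 h) (fun _ _ _ => by positivity)

lemma woff_succ (i : Fin M) (l m : ℕ) :
    D.woff i l (m + 1) = D.woff i l m + (D.Nsh i l m : ℝ) * 2 ^ m := Finset.sum_range_succ _ _

lemma stt_succ (i : Fin M) (l : ℕ) : D.stt i (l + 1) = D.stt i l + D.Len i l :=
  Finset.sum_range_succ _ _

lemma stt_mono (i : Fin M) {l l' : ℕ} (h : l ≤ l') : D.stt i l ≤ D.stt i l' :=
  Finset.sum_le_sum_of_subset_of_nonneg (Finset.range_subset_range.2 h) fun _ _ _ => D.Len_nonneg i _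

end Dat
end SP24


namespace SP24
namespace Dat

variable {M : ℕ} {Task : Type} [Fintype Task] (D : Dat M Task)

-- window start of shelf (i, l, m, q)
noncomputable def ws (i : Fin M) (l m qq : ℕ) : ℝ :=
  D.stt i l + D.woff i l m + (qq : ℝ) * 2 ^ m

lemma ws_nonneg (i : Fin M) (l m qq : ℕ) : 0 ≤ D.ws i l m qq := by
  have h1 := D.stt_nonneg i l
  have h2 := D.woff_nonneg i l m
  have h3 : (0:ℝ) ≤ (qq : ℝ) * 2 ^ m := by positivity
  unfold ws; linarith

lemma s_eq_ws (k : Task) : D.s k = D.ws (D.mach k) (D.lc k) (D.mc k) (D.q k) := rfl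

/-- lexicographic separation of shelf windows -/
lemma ws_sep (i : Fin M) {l m qq l' m' q' : ℕ}
    (hml : m ≤ l) (hq : qq < D.Nsh i l m)
    (hlex : l < l' ∨ (l = l' ∧ m < m') ∨ (l = l' ∧ m = m' ∧ qq < q')) :
    D.ws i l m qq + 2 ^ m ≤ D.ws i l' m' q' := by
  have hqN : (qq : ℝ) + 1 ≤ (D.Nsh i l m : ℝ) := by exact_mod_cast hq
  have hend : D.ws i l m qq + 2 ^ m ≤ D.stt i l + D.woff i l (m + 1) := by
    rw [D.woff_succ]
    unfold ws
    have : ((qq : ℝ) + 1) * 2 ^ m ≤ (D.Nsh i l m : ℝ) * 2 ^ m := by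
      apply mul_le_mul_of_nonneg_right hqN (by positivity)
    linarith
  rcases hlex with h | ⟨rfl, h⟩ | ⟨rfl, rfl, h⟩
  · -- l < l'
    have h1 : D.stt i l + D.woff i l (m + 1) ≤ D.stt i l + D.Len i l :=
      add_le_add_right (D.woff_mono i l (by omega)) _
    have h2 : D.stt i l + D.Len i l ≤ D.stt i l' := by
      rw [← D.stt_succ]; exact D.stt_mono i (by omega)
    have h3 : D.stt i l' ≤ D.ws i l' m' q' := by
      have := D.woff_nonneg i l' m'
      have : (0:ℝ) ≤ (q' : ℝ) * 2 ^ m' := by positivity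
      unfold ws; linarith [D.woff_nonneg i l' m']
    linarith
  · -- same l, m < m'
    have h1 : D.woff i l (m + 1) ≤ D.woff i l m' := D.woff_mono i l (by omega)
    have h3 : (0:ℝ) ≤ (q' : ℝ) * 2 ^ m' := by positivity
    unfold ws at *; linarith
  · -- same l, m, qq < q'
    have : ((qq : ℝ) + 1) * 2 ^ m ≤ (q' : ℝ) * 2 ^ m := by
      apply mul_le_mul_of_nonneg_right _ (by positivity)
      exact_mod_cast h
    unfold ws at *; linarith

end Dat
end SP24
namespace SP24

lemma pow_clog_le_two_mul (n : ℕ) (h : 1 ≤ n) : 2 ^ (Nat.clog 2 n) ≤ 2 * n := by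
  rcases eq_or_lt_of_le h with h1 | h1
  · simp [← h1]
  · have h2 : 2 ^ (Nat.clog 2 n - 1) < n := Nat.pow_pred_clog_lt_self one_lt_two h1
    have h3 : 0 < Nat.clog 2 n := Nat.clog_pos one_lt_two h1
    calc 2 ^ (Nat.clog 2 n) = 2 * 2 ^ (Nat.clog 2 n - 1) := by
          rw [← pow_succ']; congr 1; omega
      _ ≤ 2 * n := by omega

namespace Dat

variable {M : ℕ} {Task : Type} [Fintype Task] (D : Dat M Task)

lemma P_le_pow_mc (k : Task) : D.P k ≤ 2 ^ (D.mc k) := Nat.le_pow_clog one_lt_two _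

lemma c_le_pow_lc (k : Task) : D.c k ≤ 2 ^ (D.lc k) := Nat.le_pow_clog one_lt_two _

lemma pow_mc_le (k : Task) (h : 1 ≤ D.P k) : 2 ^ (D.mc k) ≤ 2 * D.P k :=
  pow_clog_le_two_mul _ h

lemma pow_lc_le (k : Task) (h : 1 ≤ D.c k) : 2 ^ (D.lc k) ≤ 2 * D.c k :=
  pow_clog_le_two_mul _ h

lemma mc_le_lc (k : Task) (h : D.P k ≤ D.c k) : D.mc k ≤ D.lc k :=
  Nat.clog_mono_right 2 h

lemma mem_cls_self (k : Task) : k ∈ D.cls (D.mach k) (D.lc k) (D.mc k) := by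
  simp [cls]

lemma q_lt_Nsh (k : Task) (hcap : 0 < D.cap (D.mach k)) (ha : ∀ k', 0 ≤ D.a k') :
    D.q k < D.Nsh (D.mach k) (D.lc k) (D.mc k) := by
  unfold q Nsh
  by_cases hb : D.big k
  · simp only [hb, if_true]
    have hsub : (D.cls (D.mach k) (D.lc k) (D.mc k)).filter (fun k' => D.big k' ∧ D.ord k' < D.ord k)
        ⊂ (D.cls (D.mach k) (D.lc k) (D.mc k)).filter D.big := by
      constructor
      · intro k' hk'
        simp only [Finset.mem_filter] at *
        exact ⟨hk'.1, hk'.2.1⟩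
      · intro hcon
        have : k ∈ (D.cls (D.mach k) (D.lc k) (D.mc k)).filter D.big := by
          simp only [Finset.mem_filter]; exact ⟨D.mem_cls_self k, hb⟩
        have := hcon this
        simp only [Finset.mem_filter] at this
        omega
    have := Finset.card_lt_card hsub
    unfold B; omega
  · simp only [hb, if_false]
    have hAle : D.Apre k ≤ D.Atot (D.mach k) (D.lc k) (D.mc k) :=
      Finset.sum_le_sum_of_subset_of_nonneg (Finset.filter_subset _ _) (fun k' _ _ => ha k')
    have hfloor : ⌊2 * D.Apre k / D.cap (D.mach k)⌋₊ ≤ D.Fh (D.mach k) (D.lc k) (D.mc k) := by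
      apply Nat.floor_le_floor
      gcongr
    omega

end Dat
end SP24
namespace SP24
namespace Dat

variable {M : ℕ} {Task : Type} [Fintype Task] (D : Dat M Task)

lemma rank_strict (i : Fin M) (l m : ℕ) {k1 k2 : Task}
    (h1 : k1 ∈ (D.cls i l m).filter D.big) (h2 : D.big k2) (hlt : D.ord k1 < D.ord k2) :
    ((D.cls i l m).filter (fun k' => D.big k' ∧ D.ord k' < D.ord k1)).card <
    ((D.cls i l m).filter (fun k' => D.big k' ∧ D.ord k' < D.ord k2)).card := by
  apply Finset.card_lt_card
  constructor
  · intro k' hk'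
    simp only [Finset.mem_filter] at *
    exact ⟨hk'.1, hk'.2.1, by omega⟩
  · intro hcon
    simp only [Finset.mem_filter] at h1
    have : k1 ∈ (D.cls i l m).filter (fun k' => D.big k' ∧ D.ord k' < D.ord k2) := by
      simp only [Finset.mem_filter]; exact ⟨h1.1, h1.2, hlt⟩
    have := hcon this
    simp only [Finset.mem_filter] at this
    omega

lemma bigq_lt_B (k : Task) (hb : D.big k) : D.q k < D.B (D.mach k) (D.lc k) (D.mc k) := by
  unfold q
  simp only [hb, if_true]
  apply Finset.card_lt_card
  constructor
  · intro k' hk'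
    simp only [Finset.mem_filter] at *
    exact ⟨hk'.1, hk'.2.1⟩
  · intro hcon
    have : k ∈ (D.cls (D.mach k) (D.lc k) (D.mc k)).filter D.big := by
      simp only [Finset.mem_filter]; exact ⟨D.mem_cls_self k, hb⟩
    have := hcon this
    simp only [Finset.mem_filter] at this
    omega

lemma smallq_ge_B (k : Task) (hb : ¬ D.big k) : D.B (D.mach k) (D.lc k) (D.mc k) ≤ D.q k := by
  unfold q; simp only [hb, if_false]; omega

lemma cap_ok (hcap : ∀ i, 0 < D.cap i) (ha : ∀ k, 0 ≤ D.a k)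
    (hacap : ∀ k, D.a k ≤ D.cap (D.mach k)) (hPc : ∀ k, D.P k ≤ D.c k)
    (hord : Function.Injective D.ord) (i : Fin M) (t : ℝ) :
    ∑ k ∈ Finset.univ.filter
      (fun k => D.mach k = i ∧ D.s k ≤ t ∧ t < D.s k + (D.P k : ℝ)), D.a k ≤ D.cap i := by
  set R := Finset.univ.filter
    (fun k => D.mach k = i ∧ D.s k ≤ t ∧ t < D.s k + (D.P k : ℝ)) with hRdef
  rcases R.eq_empty_or_nonempty with hR | hR
  · rw [hR, Finset.sum_empty]; exact le_of_lt (hcap i)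
  obtain ⟨k0, hk0⟩ := hR
  have hmem : ∀ k ∈ R, D.mach k = i ∧ D.s k ≤ t ∧ t < D.s k + (D.P k : ℝ) := by
    intro k hk; rw [hRdef] at hk; simpa using hk
  -- each task's interval lies in its window
  have hin : ∀ k ∈ R, D.ws i (D.lc k) (D.mc k) (D.q k) ≤ t ∧
      t < D.ws i (D.lc k) (D.mc k) (D.q k) + 2 ^ (D.mc k) := by
    intro k hk
    obtain ⟨hm, h1, h2⟩ := hmem k hk
    have hws : D.s k = D.ws i (D.lc k) (D.mc k) (D.q k) := by rw [D.s_eq_ws, hm]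
    have hP : (D.P k : ℝ) ≤ 2 ^ (D.mc k) := by
      exact_mod_cast Nat.cast_le.2 (D.P_le_pow_mc k) |>.trans (by push_cast; norm_num)
    constructor
    · rw [← hws]; exact h1
    · rw [← hws]; linarith
  -- lexicographically separated windows cannot both contain t
  have sep_con : ∀ k1 ∈ R, ∀ k2 ∈ R,
      (D.lc k1 < D.lc k2 ∨ (D.lc k1 = D.lc k2 ∧ D.mc k1 < D.mc k2) ∨
        (D.lc k1 = D.lc k2 ∧ D.mc k1 = D.mc k2 ∧ D.q k1 < D.q k2)) → False := by
    intro k1 h1 k2 h2 hlex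
    have e1 := hin k1 h1
    have e2 := hin k2 h2
    have hm1 : D.mach k1 = i := (hmem k1 h1).1
    have hq1 : D.q k1 < D.Nsh i (D.lc k1) (D.mc k1) := by
      have := D.q_lt_Nsh k1 (by rw [hm1]; exact hcap i) ha
      rwa [hm1] at this
    have := D.ws_sep i (D.mc_le_lc k1 (hPc k1)) hq1 hlex
    linarith [e1.2, e2.1]
  -- all tasks in R share the same triple as k0
  have htri : ∀ k ∈ R, D.lc k = D.lc k0 ∧ D.mc k = D.mc k0 ∧ D.q k = D.q k0 := by
    intro k hk
    have hl : D.lc k = D.lc k0 := by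
      rcases Nat.lt_trichotomy (D.lc k) (D.lc k0) with h | h | h
      · exact absurd (sep_con k hk k0 hk0 (Or.inl h)) (by simp)
      · exact h
      · exact absurd (sep_con k0 hk0 k hk (Or.inl h)) (by simp)
    have hm : D.mc k = D.mc k0 := by
      rcases Nat.lt_trichotomy (D.mc k) (D.mc k0) with h | h | h
      · exact absurd (sep_con k hk k0 hk0 (Or.inr (Or.inl ⟨hl, h⟩))) (by simp)
      · exact h
      · exact absurd (sep_con k0 hk0 k hk (Or.inr (Or.inl ⟨hl.symm, h⟩))) (by simp)
    have hq : D.q k = D.q k0 := by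
      rcases Nat.lt_trichotomy (D.q k) (D.q k0) with h | h | h
      · exact absurd (sep_con k hk k0 hk0 (Or.inr (Or.inr ⟨hl, hm, h⟩))) (by simp)
      · exact h
      · exact absurd (sep_con k0 hk0 k hk (Or.inr (Or.inr ⟨hl.symm, hm.symm, h⟩))) (by simp)
    exact ⟨hl, hm, hq⟩
  have hmk0 : D.mach k0 = i := (hmem k0 hk0).1
  by_cases hb0 : D.big k0
  · -- big shelf: R = {k0}
    have hRsub : R ⊆ {k0} := by
      intro k hk
      obtain ⟨hl, hm, hq⟩ := htri k hk
      have hmk : D.mach k = i := (hmem k hk).1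
      have hbk : D.big k := by
        by_contra hsb
        have h1 := D.smallq_ge_B k hsb
        have h2 := D.bigq_lt_B k0 hb0
        rw [hmk, hl, hm] at h1
        rw [hmk0] at h2
        omega
      have hclsk : k ∈ D.cls i (D.lc k0) (D.mc k0) := by
        have := D.mem_cls_self k
        rwa [hmk, hl, hm] at this
      have hclsk0 : k0 ∈ D.cls i (D.lc k0) (D.mc k0) := by
        have := D.mem_cls_self k0
        rwa [hmk0] at this
      unfold q at hq
      rw [if_pos hbk, if_pos hb0, hmk, hl, hm, hmk0] at hq
      rcases Nat.lt_trichotomy (D.ord k) (D.ord k0) with h | h | h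
      · have := D.rank_strict i (D.lc k0) (D.mc k0)
          (Finset.mem_filter.2 ⟨hclsk, hbk⟩) hb0 h
        omega
      · simp [hord h]
      · have := D.rank_strict i (D.lc k0) (D.mc k0)
          (Finset.mem_filter.2 ⟨hclsk0, hb0⟩) hbk h
        omega
    have hReq : R = {k0} := Finset.Subset.antisymm hRsub (Finset.singleton_subset_iff.2 hk0)
    rw [hReq, Finset.sum_singleton]
    have := hacap k0; rwa [hmk0] at this
  · -- small shelf
    set G := D.smalls i (D.lc k0) (D.mc k0) with hGdef
    set AG : Task → ℝ := fun k => ∑ k' ∈ G.filter (fun k' => D.ord k' < D.ord k), D.a k' with hAGdef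
    set v := ⌊2 * D.Apre k0 / D.cap i⌋₊ with hvdef
    have hprop : ∀ k ∈ R, ¬ D.big k ∧ k ∈ G ∧ D.Apre k = AG k ∧
        ⌊2 * D.Apre k / D.cap i⌋₊ = v := by
      intro k hk
      obtain ⟨hl, hm, hq⟩ := htri k hk
      have hmk : D.mach k = i := (hmem k hk).1
      have hsb : ¬ D.big k := by
        intro hbk
        have h1 := D.bigq_lt_B k hbk
        have h2 := D.smallq_ge_B k0 hb0
        rw [hmk, hl, hm] at h1
        rw [hmk0] at h2
        omega
      have hkG : k ∈ G := by
        rw [hGdef]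
        unfold smalls
        refine Finset.mem_filter.2 ⟨?_, hsb⟩
        have := D.mem_cls_self k
        rwa [hmk, hl, hm] at this
      have hApre : D.Apre k = AG k := by
        rw [hAGdef, hGdef]
        unfold Apre
        rw [hmk, hl, hm]
      refine ⟨hsb, hkG, hApre, ?_⟩
      unfold q at hq
      rw [if_neg hsb, if_neg hb0, hmk, hl, hm, hmk0] at hq
      rw [hvdef]
      omega
    obtain ⟨kM, hkM, hmax⟩ := R.exists_max_image D.ord ⟨k0, hk0⟩
    obtain ⟨km, hkm, hmin⟩ := R.exists_min_image D.ord ⟨k0, hk0⟩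
    have hmM : D.ord km ≤ D.ord kM := hmax km hkm
    have hsplit : AG kM = AG km +
        ∑ k' ∈ G.filter (fun k' => ¬ (D.ord k' < D.ord km) ∧ D.ord k' < D.ord kM), D.a k' := by
      rw [hAGdef]
      simp only []
      rw [← Finset.sum_filter_add_sum_filter_not
        (G.filter (fun k' => D.ord k' < D.ord kM)) (fun k' => D.ord k' < D.ord km)]
      congr 1
      · congr 1
        ext k'
        simp only [Finset.mem_filter]
        constructor
        · rintro ⟨⟨h1, _⟩, h3⟩; exact ⟨h1, h3⟩
        · rintro ⟨h1, h3⟩; exact ⟨⟨h1, by omega⟩, h3⟩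
      · congr 1
        ext k'
        simp only [Finset.mem_filter]
        tauto
    have hsub2 : ∑ k ∈ R.erase kM, D.a k ≤
        ∑ k' ∈ G.filter (fun k' => ¬ (D.ord k' < D.ord km) ∧ D.ord k' < D.ord kM), D.a k' := by
      apply Finset.sum_le_sum_of_subset_of_nonneg
      · intro k hk
        have hkR := Finset.mem_of_mem_erase hk
        have hne : k ≠ kM := Finset.ne_of_mem_erase hk
        refine Finset.mem_filter.2 ⟨(hprop k hkR).2.1, ?_, ?_⟩
        · have := hmin k hkR; omega
        · have h1 := hmax k hkR
          have h2 : D.ord k ≠ D.ord kM := fun h => hne (hord h)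
          omega
      · intro k _ _; exact ha k
    have hsum : ∑ k ∈ R, D.a k = D.a kM + ∑ k ∈ R.erase kM, D.a k :=
      (Finset.add_sum_erase R D.a hkM).symm
    have hApnn : ∀ k, 0 ≤ D.Apre k := fun k => Finset.sum_nonneg fun k' _ => ha k'
    have hxM := (hprop kM hkM)
    have hxm := (hprop km hkm)
    have hup : 2 * D.Apre kM / D.cap i < (v : ℝ) + 1 := by
      rw [← hxM.2.2.2]
      push_cast
      exact Nat.lt_floor_add_one _
    have hlo : (v : ℝ) ≤ 2 * D.Apre km / D.cap i := by
      rw [← hxm.2.2.2]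
      exact Nat.floor_le (div_nonneg (by linarith [hApnn km]) (le_of_lt (hcap i)))
    have hcapi := hcap i
    have hup' : 2 * D.Apre kM < ((v : ℝ) + 1) * D.cap i := (div_lt_iff₀ hcapi).1 hup
    have hlo' : (v : ℝ) * D.cap i ≤ 2 * D.Apre km := (le_div_iff₀ hcapi).1 hlo
    have hsmall : 2 * D.a kM ≤ D.cap i := by
      have := hxM.1
      unfold big at this
      push_neg at this
      rwa [(hmem kM hkM).1] at this
    have hAM : D.Apre kM = AG kM := hxM.2.2.1
    have hAm : D.Apre km = AG km := hxm.2.2.1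
    linarith [hsub2, hsum, hsplit]

end Dat
end SP24
namespace SP24
namespace Dat

variable {M : ℕ} {Task : Type} [Fintype Task] (D : Dat M Task)

lemma geo_le (n : ℕ) : ∑ j ∈ Finset.range n, (2:ℝ)^j ≤ 2^n := by
  rw [geom_sum_eq (by norm_num : (2:ℝ) ≠ 1) n]
  have h1 : (0:ℝ) < 2 - 1 := by norm_num
  rw [div_le_iff₀ h1]
  nlinarith [pow_nonneg (by norm_num : (0:ℝ) ≤ 2) n]

lemma S1_bound (hP1 : ∀ k, 1 ≤ D.P k) (hPc : ∀ k, D.P k ≤ D.c k)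
    (hbigvol : ∀ i n, ∑ k ∈ Finset.univ.filter
        (fun k => D.mach k = i ∧ D.c k ≤ n ∧ D.big k), (D.P k : ℝ) ≤ (n:ℝ))
    (i : Fin M) (l : ℕ) :
    ∑ l' ∈ Finset.range (l+1), ∑ m ∈ Finset.range (l'+1), (D.B i l' m : ℝ) * 2 ^ m
      ≤ 2 * 2 ^ l := by
  have hstep1 : ∑ l' ∈ Finset.range (l+1), ∑ m ∈ Finset.range (l'+1), (D.B i l' m : ℝ) * 2 ^ m
      ≤ ∑ l' ∈ Finset.range (l+1), ∑ m ∈ Finset.range (l+1), (D.B i l' m : ℝ) * 2 ^ m := by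
    apply Finset.sum_le_sum
    intro l' hl'
    apply Finset.sum_le_sum_of_subset_of_nonneg
    · apply Finset.range_subset_range.2
      simp only [Finset.mem_range] at hl'; omega
    · intro m _ _; positivity
  have hBig : ∀ l' m : ℕ, (D.B i l' m : ℝ) * 2 ^ m
      = ∑ k ∈ (D.cls i l' m).filter D.big, (2:ℝ) ^ (D.mc k) := by
    intro l' m
    rw [Finset.sum_congr rfl (fun k hk => ?_), Finset.sum_const, nsmul_eq_mul]
    · rfl
    · simp only [Finset.mem_filter, cls, Finset.mem_univ, true_and] at hk
      rw [hk.1.2.2]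
  set BigAll := Finset.univ.filter (fun k => D.mach k = i ∧ D.c k ≤ 2 ^ l ∧ D.big k) with hBA
  have hfib : ∑ l' ∈ Finset.range (l+1), ∑ m ∈ Finset.range (l+1),
      ∑ k ∈ (D.cls i l' m).filter D.big, (2:ℝ) ^ (D.mc k)
      = ∑ k ∈ BigAll, (2:ℝ) ^ (D.mc k) := by
    rw [← Finset.sum_product']
    rw [← Finset.sum_fiberwise_of_maps_to (g := fun k => (D.lc k, D.mc k))
      (t := Finset.range (l+1) ×ˢ Finset.range (l+1)) ?_ (fun k => (2:ℝ) ^ (D.mc k))]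
    · apply Finset.sum_congr rfl
      intro pr hpr
      simp only [Finset.mem_product, Finset.mem_range] at hpr
      apply Finset.sum_congr _ (fun _ _ => rfl)
      ext k
      simp only [Finset.mem_filter, cls, Finset.mem_univ, true_and, hBA, Prod.ext_iff]
      have hc2 : D.lc k = pr.1 → D.c k ≤ 2 ^ l := by
        intro h
        calc D.c k ≤ 2 ^ (D.lc k) := D.c_le_pow_lc k
          _ ≤ 2 ^ l := Nat.pow_le_pow_right (by norm_num) (by omega)
      tauto
    · intro k hk
      simp only [hBA, Finset.mem_filter, Finset.mem_univ, true_and] at hk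
      simp only [Finset.mem_product, Finset.mem_range]
      have hlc : D.lc k ≤ l := by
        have h1 : Nat.clog 2 (D.c k) ≤ Nat.clog 2 (2 ^ l) := Nat.clog_mono_right 2 hk.2.1
        rwa [Nat.clog_pow 2 l (by norm_num)] at h1
      have hmc : D.mc k ≤ D.lc k := D.mc_le_lc k (hPc k)
      omega
  have hlast : ∑ k ∈ BigAll, (2:ℝ) ^ (D.mc k) ≤ 2 * 2 ^ l := by
    have h1 : ∑ k ∈ BigAll, (2:ℝ) ^ (D.mc k) ≤ ∑ k ∈ BigAll, 2 * (D.P k : ℝ) := by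
      apply Finset.sum_le_sum
      intro k _
      have := D.pow_mc_le k (hP1 k)
      exact_mod_cast this
    have h2 := hbigvol i (2 ^ l)
    rw [← Finset.mul_sum] at h1
    push_cast at h2
    linarith
  calc ∑ l' ∈ Finset.range (l+1), ∑ m ∈ Finset.range (l'+1), (D.B i l' m : ℝ) * 2 ^ m
      ≤ ∑ l' ∈ Finset.range (l+1), ∑ m ∈ Finset.range (l+1), (D.B i l' m : ℝ) * 2 ^ m := hstep1
    _ = ∑ k ∈ BigAll, (2:ℝ) ^ (D.mc k) := by
        rw [← hfib]
        exact Finset.sum_congr rfl fun l' _ => Finset.sum_congr rfl fun m _ => hBig l' m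
    _ ≤ 2 * 2 ^ l := hlast

end Dat
end SP24
namespace SP24
namespace Dat

variable {M : ℕ} {Task : Type} [Fintype Task] (D : Dat M Task)

lemma S2_bound (hcap : ∀ i, 0 < D.cap i) (ha : ∀ k, 0 ≤ D.a k)
    (hP1 : ∀ k, 1 ≤ D.P k) (hPc : ∀ k, D.P k ≤ D.c k)
    (hvol : ∀ i n, ∑ k ∈ Finset.univ.filter
        (fun k => D.mach k = i ∧ D.c k ≤ n), D.a k * (D.P k : ℝ) ≤ D.cap i * (n:ℝ))
    (i : Fin M) (l : ℕ) :
    ∑ l' ∈ Finset.range (l+1), ∑ m ∈ Finset.range (l'+1), (D.Fh i l' m : ℝ) * 2 ^ m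
      ≤ 4 * 2 ^ l := by
  have hAnn : ∀ l' m, 0 ≤ D.Atot i l' m := fun l' m => Finset.sum_nonneg fun k _ => ha k
  have hstep1 : ∑ l' ∈ Finset.range (l+1), ∑ m ∈ Finset.range (l'+1), (D.Fh i l' m : ℝ) * 2 ^ m
      ≤ ∑ l' ∈ Finset.range (l+1), ∑ m ∈ Finset.range (l+1), (D.Fh i l' m : ℝ) * 2 ^ m := by
    apply Finset.sum_le_sum
    intro l' hl'
    apply Finset.sum_le_sum_of_subset_of_nonneg
    · apply Finset.range_subset_range.2
      simp only [Finset.mem_range] at hl'; omega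
    · intro m _ _; positivity
  have hF : ∀ l' m : ℕ, (D.Fh i l' m : ℝ) * 2 ^ m
      ≤ (2 / D.cap i) * (D.Atot i l' m * 2 ^ m) := by
    intro l' m
    have h1 : (D.Fh i l' m : ℝ) ≤ 2 * D.Atot i l' m / D.cap i :=
      Nat.floor_le (div_nonneg (by linarith [hAnn l' m]) (le_of_lt (hcap i)))
    have h2 : 2 * D.Atot i l' m / D.cap i = (2 / D.cap i) * D.Atot i l' m := by ring
    calc (D.Fh i l' m : ℝ) * 2 ^ m ≤ (2 * D.Atot i l' m / D.cap i) * 2 ^ m := by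
          apply mul_le_mul_of_nonneg_right h1 (by positivity)
      _ = (2 / D.cap i) * (D.Atot i l' m * 2 ^ m) := by ring
  have hAt : ∀ l' m : ℕ, D.Atot i l' m * 2 ^ m
      = ∑ k ∈ D.smalls i l' m, D.a k * (2:ℝ) ^ (D.mc k) := by
    intro l' m
    rw [Atot, Finset.sum_mul]
    apply Finset.sum_congr rfl
    intro k hk
    simp only [smalls, cls, Finset.mem_filter, Finset.mem_univ, true_and] at hk
    rw [hk.1.2.2]
  set SmallAll := Finset.univ.filter (fun k => D.mach k = i ∧ D.c k ≤ 2 ^ l ∧ ¬ D.big k)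
    with hSA
  have hfib : ∑ l' ∈ Finset.range (l+1), ∑ m ∈ Finset.range (l+1),
      ∑ k ∈ D.smalls i l' m, D.a k * (2:ℝ) ^ (D.mc k)
      = ∑ k ∈ SmallAll, D.a k * (2:ℝ) ^ (D.mc k) := by
    rw [← Finset.sum_product']
    rw [← Finset.sum_fiberwise_of_maps_to (g := fun k => (D.lc k, D.mc k))
      (t := Finset.range (l+1) ×ˢ Finset.range (l+1)) ?_ (fun k => D.a k * (2:ℝ) ^ (D.mc k))]
    · apply Finset.sum_congr rfl
      intro pr hpr
      simp only [Finset.mem_product, Finset.mem_range] at hpr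
      apply Finset.sum_congr _ (fun _ _ => rfl)
      ext k
      simp only [smalls, Finset.mem_filter, cls, Finset.mem_univ, true_and, hSA, Prod.ext_iff]
      have hc2 : D.lc k = pr.1 → D.c k ≤ 2 ^ l := by
        intro h
        calc D.c k ≤ 2 ^ (D.lc k) := D.c_le_pow_lc k
          _ ≤ 2 ^ l := Nat.pow_le_pow_right (by norm_num) (by omega)
      tauto
    · intro k hk
      simp only [hSA, Finset.mem_filter, Finset.mem_univ, true_and] at hk
      simp only [Finset.mem_product, Finset.mem_range]
      have hlc : D.lc k ≤ l := by
        have h1 : Nat.clog 2 (D.c k) ≤ Nat.clog 2 (2 ^ l) := Nat.clog_mono_right 2 hk.2.1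
        rwa [Nat.clog_pow 2 l (by norm_num)] at h1
      have hmc : D.mc k ≤ D.lc k := D.mc_le_lc k (hPc k)
      omega
  have hlast : ∑ k ∈ SmallAll, D.a k * (2:ℝ) ^ (D.mc k) ≤ 2 * (D.cap i * 2 ^ l) := by
    have h1 : ∑ k ∈ SmallAll, D.a k * (2:ℝ) ^ (D.mc k)
        ≤ ∑ k ∈ SmallAll, 2 * (D.a k * (D.P k : ℝ)) := by
      apply Finset.sum_le_sum
      intro k _
      have h2 : (2:ℝ) ^ (D.mc k) ≤ 2 * (D.P k : ℝ) := by
        exact_mod_cast D.pow_mc_le k (hP1 k)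
      calc D.a k * (2:ℝ) ^ (D.mc k) ≤ D.a k * (2 * (D.P k : ℝ)) :=
            mul_le_mul_of_nonneg_left h2 (ha k)
        _ = 2 * (D.a k * (D.P k : ℝ)) := by ring
    have h3 : ∑ k ∈ SmallAll, D.a k * (D.P k : ℝ)
        ≤ ∑ k ∈ Finset.univ.filter (fun k => D.mach k = i ∧ D.c k ≤ 2 ^ l),
            D.a k * (D.P k : ℝ) := by
      apply Finset.sum_le_sum_of_subset_of_nonneg
      · intro k hk
        simp only [hSA, Finset.mem_filter, Finset.mem_univ, true_and] at *
        exact ⟨hk.1, hk.2.1⟩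
      · intro k _ _
        have := ha k; positivity
    have h4 := hvol i (2 ^ l)
    rw [← Finset.mul_sum] at h1
    push_cast at h4
    linarith
  have hfinal : (2 / D.cap i) * (2 * (D.cap i * 2 ^ l)) = 4 * 2 ^ l := by
    have : D.cap i ≠ 0 := ne_of_gt (hcap i)
    field_simp
    ring
  calc ∑ l' ∈ Finset.range (l+1), ∑ m ∈ Finset.range (l'+1), (D.Fh i l' m : ℝ) * 2 ^ m
      ≤ ∑ l' ∈ Finset.range (l+1), ∑ m ∈ Finset.range (l+1), (D.Fh i l' m : ℝ) * 2 ^ m := hstep1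
    _ ≤ ∑ l' ∈ Finset.range (l+1), ∑ m ∈ Finset.range (l+1),
          (2 / D.cap i) * (D.Atot i l' m * 2 ^ m) :=
        Finset.sum_le_sum fun l' _ => Finset.sum_le_sum fun m _ => hF l' m
    _ = (2 / D.cap i) * ∑ l' ∈ Finset.range (l+1), ∑ m ∈ Finset.range (l+1),
          D.Atot i l' m * 2 ^ m := by
        rw [Finset.mul_sum]
        exact Finset.sum_congr rfl fun l' _ => (Finset.mul_sum _ _ _).symm
    _ ≤ (2 / D.cap i) * (2 * (D.cap i * 2 ^ l)) := by
        apply mul_le_mul_of_nonneg_left _ (by have := hcap i; positivity)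
        calc ∑ l' ∈ Finset.range (l+1), ∑ m ∈ Finset.range (l+1), D.Atot i l' m * 2 ^ m
            = ∑ k ∈ SmallAll, D.a k * (2:ℝ) ^ (D.mc k) := by
              rw [← hfib]
              exact Finset.sum_congr rfl fun l' _ => Finset.sum_congr rfl fun m _ => hAt l' m
          _ ≤ 2 * (D.cap i * 2 ^ l) := hlast
    _ = 4 * 2 ^ l := hfinal

end Dat
end SP24
namespace SP24
namespace Dat

variable {M : ℕ} {Task : Type} [Fintype Task] (D : Dat M Task)

lemma comp_le (hcap : ∀ i, 0 < D.cap i) (ha : ∀ k, 0 ≤ D.a k)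
    (hP1 : ∀ k, 1 ≤ D.P k) (hPc : ∀ k, D.P k ≤ D.c k)
    (hvol : ∀ i n, ∑ k ∈ Finset.univ.filter
        (fun k => D.mach k = i ∧ D.c k ≤ n), D.a k * (D.P k : ℝ) ≤ D.cap i * (n:ℝ))
    (hbigvol : ∀ i n, ∑ k ∈ Finset.univ.filter
        (fun k => D.mach k = i ∧ D.c k ≤ n ∧ D.big k), (D.P k : ℝ) ≤ (n:ℝ))
    (k : Task) : D.s k + (D.P k : ℝ) ≤ 20 * (D.c k : ℝ) := by
  set i := D.mach k with hi
  set l := D.lc k with hl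
  set m := D.mc k with hm
  have hq : D.q k < D.Nsh i l m := D.q_lt_Nsh k (hcap i) ha
  have hqR : (D.q k : ℝ) + 1 ≤ (D.Nsh i l m : ℝ) := by exact_mod_cast hq
  have hP2 : (D.P k : ℝ) ≤ 2 ^ m := by exact_mod_cast D.P_le_pow_mc k
  have h1 : D.s k + (D.P k : ℝ) ≤ D.stt i l + D.woff i l (m + 1) := by
    rw [D.woff_succ]
    have h2 : ((D.q k : ℝ) + 1) * 2 ^ m ≤ (D.Nsh i l m : ℝ) * 2 ^ m :=
      mul_le_mul_of_nonneg_right hqR (by positivity)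
    have hs : D.s k = D.stt i l + D.woff i l m + (D.q k : ℝ) * 2 ^ m := rfl
    rw [hs]
    nlinarith [hP2, h2]
  have h2 : D.woff i l (m + 1) ≤ D.Len i l := D.woff_mono i l (by
    have := D.mc_le_lc k (hPc k); omega)
  have h3 : D.stt i l + D.Len i l = ∑ l' ∈ Finset.range (l + 1), D.Len i l' :=
    (Finset.sum_range_succ _ _).symm
  have h4 : ∑ l' ∈ Finset.range (l + 1), D.Len i l'
      = (∑ l' ∈ Finset.range (l+1), ∑ m' ∈ Finset.range (l'+1), (D.B i l' m' : ℝ) * 2 ^ m')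
      + (∑ l' ∈ Finset.range (l+1), ∑ m' ∈ Finset.range (l'+1), (D.Fh i l' m' : ℝ) * 2 ^ m')
      + (∑ l' ∈ Finset.range (l+1), ∑ m' ∈ Finset.range (l'+1), (2:ℝ) ^ m') := by
    rw [← Finset.sum_add_distrib, ← Finset.sum_add_distrib]
    apply Finset.sum_congr rfl
    intro l' _
    have hLen : D.Len i l' = ∑ m' ∈ Finset.range (l'+1), (D.Nsh i l' m' : ℝ) * 2 ^ m' := rfl
    rw [hLen, ← Finset.sum_add_distrib, ← Finset.sum_add_distrib]
    apply Finset.sum_congr rfl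
    intro m' _
    have hN : (D.Nsh i l' m' : ℝ) = (D.B i l' m' : ℝ) + (D.Fh i l' m' : ℝ) + 1 := by
      unfold Nsh; push_cast; ring
    rw [hN]; ring
  have hS1 := D.S1_bound hP1 hPc hbigvol i l
  have hS2 := D.S2_bound hcap ha hP1 hPc hvol i l
  have hS3 : ∑ l' ∈ Finset.range (l+1), ∑ m' ∈ Finset.range (l'+1), (2:ℝ) ^ m' ≤ 4 * 2 ^ l := by
    have hinner : ∀ l' : ℕ, ∑ m' ∈ Finset.range (l'+1), (2:ℝ) ^ m' ≤ 2 * 2 ^ l' := by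
      intro l'
      calc ∑ m' ∈ Finset.range (l'+1), (2:ℝ) ^ m' ≤ 2 ^ (l'+1) := geo_le (l'+1)
        _ = 2 * 2 ^ l' := by ring
    calc ∑ l' ∈ Finset.range (l+1), ∑ m' ∈ Finset.range (l'+1), (2:ℝ) ^ m'
        ≤ ∑ l' ∈ Finset.range (l+1), 2 * 2 ^ l' := Finset.sum_le_sum fun l' _ => hinner l'
      _ = 2 * ∑ l' ∈ Finset.range (l+1), (2:ℝ) ^ l' := by rw [Finset.mul_sum]
      _ ≤ 2 * 2 ^ (l+1) := by
          apply mul_le_mul_of_nonneg_left (geo_le (l+1)) (by norm_num)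
      _ = 4 * 2 ^ l := by ring
  have h10 : D.s k + (D.P k : ℝ) ≤ 10 * 2 ^ l := by
    rw [h4] at h3
    linarith [h1, h2, h3, hS1, hS2, hS3]
  have hcl : (2:ℝ) ^ l ≤ 2 * (D.c k : ℝ) := by
    have h5 : 2 ^ (D.lc k) ≤ 2 * D.c k := D.pow_lc_le k (le_trans (hP1 k) (hPc k))
    exact_mod_cast h5
  linarith

end Dat
end SP24

/-- SynchPack-2 versus the preemptive (no-migration) optimum: if the optimal (LP2) solution has
`x_{j0} = 0` for every job, then there is a valid nonpreemptive schedule without migration whose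
weighted sum of job completion times is at most `24` times that of any valid preemptive schedule
without migration. -/
theorem synchpack2_24_approx_vs_preemptive
    (M N : ℕ) (Task : Type) [Fintype Task]
    (job : Task → Fin N)
    (cap : Fin M → ℝ) (hcap : ∀ i, 0 < cap i)
    (w : Fin N → ℝ) (hw : ∀ j, 0 < w j)
    (a : Task → ℝ) (ha : ∀ k, 0 < a k)
    (place : Task → Finset (Fin M)) (hplace : ∀ k, (place k).Nonempty)
    (p : Task → Fin M → ℕ) (hp : ∀ k, ∀ i ∈ place k, 1 ≤ p k i)
    (T : ℕ)
    (hT : T = Finset.univ.sup fun i => ∑ k ∈ Finset.univ.filter (fun k => i ∈ place k), p k i)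
    (L : ℕ) (hLub : T ≤ 2 ^ L) (hLmin : ∀ L' : ℕ, T ≤ 2 ^ L' → L ≤ L')
    -- a feasible solution (z, x) of (LP2) …
    (z : Task → Fin M → ℕ → ℝ) (x : Fin N → ℕ → ℝ)
    (hz0 : ∀ k i l, 0 ≤ z k i l)
    (hzplace : ∀ k i l, i ∉ place k → z k i l = 0)
    (hxnn : ∀ j l, 0 ≤ x j l)
    (hzlen : ∀ k i, ∀ l ≤ L, (2 : ℝ) ^ l < (p k i : ℝ) → z k i l = 0)
    (hztot : ∀ k, ∑ l ∈ Finset.range (L + 1), ∑ i ∈ place k, z k i l = 1)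
    (hzfrac : ∀ k, ∀ l ≤ L, ∑ l' ∈ Finset.range (l + 1), ∑ i ∈ place k,
        z k i l' * (p k i : ℝ) ≤ 2 ^ l)
    (hzcap : ∀ i, ∀ l ≤ L, ∑ l' ∈ Finset.range (l + 1),
        ∑ k ∈ Finset.univ.filter (fun k => i ∈ place k),
          z k i l' * (p k i : ℝ) * a k ≤ cap i * 2 ^ l)
    (hxz : ∀ (j : Fin N) (k : Task), job k = j → ∀ l ≤ L,
        ∑ l' ∈ Finset.range (l + 1), x j l' ≤
          ∑ l' ∈ Finset.range (l + 1), ∑ i ∈ place k, z k i l')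
    (hxsum : ∀ j, ∑ l ∈ Finset.range (L + 1), x j l = 1)
    -- … which is optimal for (LP2) …
    (hopt : ∀ (z' : Task → Fin M → ℕ → ℝ) (x' : Fin N → ℕ → ℝ),
      (∀ k i l, 0 ≤ z' k i l) →
      (∀ k i l, i ∉ place k → z' k i l = 0) →
      (∀ j l, 0 ≤ x' j l) →
      (∀ k i, ∀ l ≤ L, (2 : ℝ) ^ l < (p k i : ℝ) → z' k i l = 0) →
      (∀ k, ∑ l ∈ Finset.range (L + 1), ∑ i ∈ place k, z' k i l = 1) →
      (∀ k, ∀ l ≤ L, ∑ l' ∈ Finset.range (l + 1), ∑ i ∈ place k,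
          z' k i l' * (p k i : ℝ) ≤ 2 ^ l) →
      (∀ i, ∀ l ≤ L, ∑ l' ∈ Finset.range (l + 1),
          ∑ k ∈ Finset.univ.filter (fun k => i ∈ place k),
            z' k i l' * (p k i : ℝ) * a k ≤ cap i * 2 ^ l) →
      (∀ (j : Fin N) (k : Task), job k = j → ∀ l ≤ L,
          ∑ l' ∈ Finset.range (l + 1), x' j l' ≤
            ∑ l' ∈ Finset.range (l + 1), ∑ i ∈ place k, z' k i l') →
      (∀ j, ∑ l ∈ Finset.range (L + 1), x' j l = 1) →
      ∑ j, w j * (∑ l ∈ Finset.range (L + 1),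
          (if l = 0 then (0 : ℝ) else (2 : ℝ) ^ (l - 1)) * x j l) ≤
        ∑ j, w j * (∑ l ∈ Finset.range (L + 1),
          (if l = 0 then (0 : ℝ) else (2 : ℝ) ^ (l - 1)) * x' j l))
    -- … and satisfies x_{j0} = 0 for every job
    (hx0 : ∀ j, x j 0 = 0)
    -- an arbitrary valid preemptive schedule without migration, over time slots 1,…,T
    (machine' : Task → Fin M) (hmach' : ∀ k, machine' k ∈ place k)
    (X : Task → ℕ → ℝ)
    (hX01 : ∀ k t, X k t = 0 ∨ X k t = 1)
    (hXdom : ∀ k t, X k t = 1 → 1 ≤ t ∧ t ≤ T)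
    (hpack : ∀ i t, ∑ k ∈ Finset.univ.filter (fun k => machine' k = i), a k * X k t ≤ cap i)
    (hproc : ∀ k, ∑ t ∈ Finset.Icc 1 T, X k t = (p k (machine' k) : ℝ))
    (C' : Fin N → ℕ)
    (hC' : ∀ j, C' j = Finset.sup (Finset.univ.filter fun k => job k = j)
      (fun k => Finset.sup ((Finset.Icc 1 T).filter fun t => X k t = 1) id)) :
    -- a valid nonpreemptive schedule without migration, 24-competitive with the preemptive one
    ∃ (machine : Task → Fin M) (s : Task → ℝ) (C : Fin N → ℝ),
      (∀ k, machine k ∈ place k) ∧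
      (∀ k, 0 ≤ s k) ∧
      (∀ (i : Fin M) (t : ℝ),
        ∑ k ∈ Finset.univ.filter
            (fun k => machine k = i ∧ s k ≤ t ∧ t < s k + (p k i : ℝ)), a k ≤ cap i) ∧
      (∀ k, s k + (p k (machine k) : ℝ) ≤ C (job k)) ∧
      ∑ j, w j * C j ≤ 24 * ∑ j, w j * (C' j : ℝ) := by
  classical
  let D : SP24.Dat M Task := ⟨cap, a, machine',
    (fun k => p k (machine' k)),
    (fun k => ((Finset.Icc 1 T).filter fun t => X k t = 1).sup id),
    (fun k => (Fintype.equivFin Task k : ℕ))⟩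
  have hDm : D.mach = machine' := rfl
  have hDP : ∀ k, D.P k = p k (machine' k) := fun _ => rfl
  have hDc : ∀ k, D.c k = ((Finset.Icc 1 T).filter fun t => X k t = 1).sup id := fun _ => rfl
  have hord : Function.Injective D.ord := by
    intro k1 k2 h
    exact (Fintype.equivFin Task).injective (Fin.val_injective h)
  have hann : ∀ k, 0 ≤ D.a k := fun k => le_of_lt (ha k)
  have hP1 : ∀ k, 1 ≤ D.P k := fun k => hp k _ (hmach' k)
  have hXnn : ∀ k t, 0 ≤ X k t := by
    intro k t; rcases hX01 k t with h | h <;> rw [h] <;> norm_num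
  have hex : ∀ k, ∃ t ∈ Finset.Icc 1 T, X k t = 1 := by
    intro k
    by_contra h
    push_neg at h
    have h0 : ∑ t ∈ Finset.Icc 1 T, X k t = 0 :=
      Finset.sum_eq_zero fun t ht => (hX01 k t).resolve_right (h t ht)
    rw [hproc k] at h0
    have : p k (machine' k) = 0 := by exact_mod_cast h0
    have := hP1 k
    rw [hDP] at this
    omega
  have hXc : ∀ k t, X k t = 1 → t ≤ D.c k := by
    intro k t h
    have ht := hXdom k t h
    have hmem : t ∈ (Finset.Icc 1 T).filter fun t => X k t = 1 := by
      simp only [Finset.mem_filter, Finset.mem_Icc]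
      exact ⟨⟨ht.1, ht.2⟩, h⟩
    exact Finset.le_sup (f := id) hmem
  have hfilter_eq : ∀ (k) (n : ℕ), D.c k ≤ n →
      (Finset.Icc 1 n).filter (fun t => X k t = 1)
        = (Finset.Icc 1 T).filter (fun t => X k t = 1) := by
    intro k n hn
    ext t
    simp only [Finset.mem_filter, Finset.mem_Icc]
    constructor
    · rintro ⟨⟨h1, _⟩, h3⟩
      exact ⟨⟨h1, (hXdom k t h3).2⟩, h3⟩
    · rintro ⟨⟨h1, _⟩, h3⟩
      exact ⟨⟨h1, le_trans (hXc k t h3) hn⟩, h3⟩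
  have hPsum : ∀ (k) (n : ℕ), D.c k ≤ n →
      ∑ t ∈ Finset.Icc 1 n, X k t = (D.P k : ℝ) := by
    intro k n hn
    rw [← Finset.sum_filter_of_ne (p := fun t => X k t = 1)
      (fun t _ h0 => (hX01 k t).resolve_left h0), hfilter_eq k n hn,
      Finset.sum_filter_of_ne (fun t _ h0 => (hX01 k t).resolve_left h0), hproc k, hDP]
  have hc1 : ∀ k, 1 ≤ D.c k := by
    intro k
    obtain ⟨t, ht, h1⟩ := hex k
    have h2 := hXc k t h1
    have h3 := (Finset.mem_Icc.1 ht).1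
    omega
  have hPc : ∀ k, D.P k ≤ D.c k := by
    intro k
    have hcard : ∑ t ∈ (Finset.Icc 1 T).filter (fun t => X k t = 1), X k t
        = ((((Finset.Icc 1 T).filter (fun t => X k t = 1)).card : ℕ) : ℝ) := by
      rw [Finset.card_eq_sum_ones]
      push_cast
      apply Finset.sum_congr rfl
      intro t ht
      exact (Finset.mem_filter.1 ht).2
    have h1 : (D.P k : ℝ)
        = ((((Finset.Icc 1 T).filter (fun t => X k t = 1)).card : ℕ) : ℝ) := by
      rw [hDP, ← hproc k,
        ← Finset.sum_filter_of_ne (p := fun t => X k t = 1)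
          (fun t _ h0 => (hX01 k t).resolve_left h0), hcard]
    have h2 : D.P k = ((Finset.Icc 1 T).filter (fun t => X k t = 1)).card := by
      exact_mod_cast h1
    have h3 : ((Finset.Icc 1 T).filter (fun t => X k t = 1)) ⊆ Finset.Icc 1 (D.c k) := by
      intro t ht
      have h4 := (Finset.mem_filter.1 ht)
      have h5 := (Finset.mem_Icc.1 h4.1).1
      exact Finset.mem_Icc.2 ⟨h5, hXc k t h4.2⟩
    have h6 := Finset.card_le_card h3
    rw [Nat.card_Icc] at h6
    omega
  have hacap : ∀ k, D.a k ≤ D.cap (D.mach k) := by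
    intro k
    obtain ⟨t0, _, h1⟩ := hex k
    have h2 := hpack (machine' k) t0
    have h3 : a k * X k t0 ≤
        ∑ k' ∈ Finset.univ.filter (fun k' => machine' k' = machine' k), a k' * X k' t0 := by
      apply Finset.single_le_sum (f := fun k' => a k' * X k' t0)
      · intro k' _
        exact mul_nonneg (hann k') (hXnn k' t0)
      · simp
    rw [h1, mul_one] at h3
    exact le_trans h3 h2
  have hsub_pack : ∀ (i : Fin M) (t : ℕ) (S : Finset Task), (∀ k ∈ S, machine' k = i) →
      ∑ k ∈ S, a k * X k t ≤ cap i := by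
    intro i t S hS
    refine le_trans (Finset.sum_le_sum_of_subset_of_nonneg ?_ ?_) (hpack i t)
    · intro k hk
      simp only [Finset.mem_filter, Finset.mem_univ, true_and]
      exact hS k hk
    · intro k _ _
      exact mul_nonneg (hann k) (hXnn k t)
  have hvol : ∀ (i : Fin M) (n : ℕ), ∑ k ∈ Finset.univ.filter
      (fun k => D.mach k = i ∧ D.c k ≤ n), D.a k * (D.P k : ℝ) ≤ D.cap i * (n : ℝ) := by
    intro i n
    have h1 : ∀ k ∈ Finset.univ.filter (fun k => D.mach k = i ∧ D.c k ≤ n),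
        D.a k * (D.P k : ℝ) = ∑ t ∈ Finset.Icc 1 n, a k * X k t := by
      intro k hk
      simp only [Finset.mem_filter, Finset.mem_univ, true_and] at hk
      rw [← hPsum k n hk.2, Finset.mul_sum]
    rw [Finset.sum_congr rfl h1, Finset.sum_comm]
    have h2 : ∀ t ∈ Finset.Icc 1 n, ∑ k ∈ Finset.univ.filter
        (fun k => D.mach k = i ∧ D.c k ≤ n), a k * X k t ≤ cap i := by
      intro t _
      apply hsub_pack i t
      intro k hk
      exact (Finset.mem_filter.1 hk).2.1
    calc ∑ t ∈ Finset.Icc 1 n, ∑ k ∈ Finset.univ.filter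
          (fun k => D.mach k = i ∧ D.c k ≤ n), a k * X k t
        ≤ ∑ t ∈ Finset.Icc 1 n, cap i := Finset.sum_le_sum h2
      _ = (Finset.Icc 1 n).card * cap i := by rw [Finset.sum_const, nsmul_eq_mul]
      _ = D.cap i * (n : ℝ) := by rw [Nat.card_Icc]; simp; ring
  have hbigvol : ∀ (i : Fin M) (n : ℕ), ∑ k ∈ Finset.univ.filter
      (fun k => D.mach k = i ∧ D.c k ≤ n ∧ D.big k), (D.P k : ℝ) ≤ (n : ℝ) := by
    intro i n
    have h1 : ∀ k ∈ Finset.univ.filter (fun k => D.mach k = i ∧ D.c k ≤ n ∧ D.big k),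
        (D.P k : ℝ) = ∑ t ∈ Finset.Icc 1 n, X k t := by
      intro k hk
      simp only [Finset.mem_filter, Finset.mem_univ, true_and] at hk
      rw [hPsum k n hk.2.1]
    rw [Finset.sum_congr rfl h1, Finset.sum_comm]
    have h2 : ∀ t ∈ Finset.Icc 1 n, ∑ k ∈ Finset.univ.filter
        (fun k => D.mach k = i ∧ D.c k ≤ n ∧ D.big k), X k t ≤ 1 := by
      intro t _
      set S := Finset.univ.filter (fun k => D.mach k = i ∧ D.c k ≤ n ∧ D.big k) with hS
      by_cases hE : ∃ k0 ∈ S, X k0 t = 1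
      · obtain ⟨k0, hk0, hX0⟩ := hE
        have hz : ∀ k' ∈ S.erase k0, X k' t = 0 := by
          intro k' hk'
          by_contra hne
          have hX1 : X k' t = 1 := (hX01 k' t).resolve_left hne
          have hne' : k' ≠ k0 := Finset.ne_of_mem_erase hk'
          have hm0 : machine' k0 = i := (Finset.mem_filter.1 hk0).2.1
          have hm' : machine' k' = i := (Finset.mem_filter.1 (Finset.mem_of_mem_erase hk')).2.1
          have hb0 : cap i < 2 * a k0 := by
            have := (Finset.mem_filter.1 hk0).2.2.2
            unfold SP24.Dat.big at this
            rwa [show D.cap (D.mach k0) = cap (machine' k0) from rfl, hm0] at this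
          have hb' : cap i < 2 * a k' := by
            have := (Finset.mem_filter.1 (Finset.mem_of_mem_erase hk')).2.2.2
            unfold SP24.Dat.big at this
            rwa [show D.cap (D.mach k') = cap (machine' k') from rfl, hm'] at this
          have hpair : a k0 + a k' ≤ cap i := by
            have := hsub_pack i t {k0, k'} (by
              intro k hk
              simp only [Finset.mem_insert, Finset.mem_singleton] at hk
              rcases hk with rfl | rfl
              · exact hm0
              · exact hm')
            rw [Finset.sum_pair (fun h => hne' (h.symm)), hX0, hX1, mul_one, mul_one] at this
            exact this
          linarith
        rw [← Finset.add_sum_erase S _ hk0, hX0, Finset.sum_eq_zero hz]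
        norm_num
      · push_neg at hE
        have : ∑ k ∈ S, X k t = 0 :=
          Finset.sum_eq_zero fun k hk => (hX01 k t).resolve_right (hE k hk)
        rw [this]
        norm_num
    calc ∑ t ∈ Finset.Icc 1 n, ∑ k ∈ Finset.univ.filter
          (fun k => D.mach k = i ∧ D.c k ≤ n ∧ D.big k), X k t
        ≤ ∑ t ∈ Finset.Icc 1 n, 1 := Finset.sum_le_sum h2
      _ = ((Finset.Icc 1 n).card : ℝ) := by rw [Finset.sum_const, nsmul_eq_mul, mul_one]
      _ ≤ (n : ℝ) := by rw [Nat.card_Icc]; simp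
  have hcC' : ∀ k, D.c k ≤ C' (job k) := by
    intro k
    rw [hC' (job k)]
    rw [hDc]
    exact Finset.le_sup (f := fun k => ((Finset.Icc 1 T).filter fun t => X k t = 1).sup id)
      (by simp)
  refine ⟨machine', D.s, fun j => 20 * (C' j : ℝ), hmach', D.s_nonneg, ?_, ?_, ?_⟩
  · intro i t
    have hck := D.cap_ok hcap hann hacap hPc hord i t
    have hseteq : Finset.univ.filter
        (fun k => machine' k = i ∧ D.s k ≤ t ∧ t < D.s k + (p k i : ℝ))
        = Finset.univ.filter
        (fun k => D.mach k = i ∧ D.s k ≤ t ∧ t < D.s k + (D.P k : ℝ)) := by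
      ext k
      simp only [Finset.mem_filter, Finset.mem_univ, true_and, hDm, hDP]
      constructor
      · rintro ⟨h1, h2, h3⟩
        exact ⟨h1, h2, by rwa [h1]⟩
      · rintro ⟨h1, h2, h3⟩
        exact ⟨h1, h2, by rwa [← h1]⟩
    rw [hseteq]
    exact hck
  · intro k
    have h1 := D.comp_le hcap hann hP1 hPc hvol hbigvol k
    have h2 : (D.c k : ℝ) ≤ (C' (job k) : ℝ) := Nat.cast_le.2 (hcC' k)
    have h3 : (p k (machine' k) : ℝ) = (D.P k : ℝ) := by rw [hDP]
    show D.s k + (p k (machine' k) : ℝ) ≤ 20 * (C' (job k) : ℝ)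
    rw [h3]
    linarith
  · have h0 : 0 ≤ ∑ j, w j * (C' j : ℝ) := by
      apply Finset.sum_nonneg
      intro j _
      exact mul_nonneg (le_of_lt (hw j)) (Nat.cast_nonneg _)
    have h1 : ∑ j, w j * (20 * (C' j : ℝ)) = 20 * ∑ j, w j * (C' j : ℝ) := by
      rw [Finset.mul_sum]
      exact Finset.sum_congr rfl fun j _ => by ring
    rw [h1]
    linarith
end

section
/- Let m > 0, let v_1,…,v_N ≥ 0, let C̃_1 ≤ C̃_2 ≤ … ≤ C̃_N be reals, and let δ_{jj'} ≥ 0 for j ≠ j' satisfy δ_{jj'} + δ_{j'j} = 1. Suppose that for every j, m·C̃_j ≥ v_j + Σ_{j'≠j} v_{j'} δ_{j'j}. Then for every j, m·C̃_j ≥ (1/2) Σ_{k=1}^{j} v_k. -/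
open Finset

/-- Lemma 11: for a feasible (LP3) solution on a machine of capacity `m`, with jobs indexed in
nondecreasing order of `C̃`, one has `m·C̃_j ≥ (1/2) Σ_{k=1}^{j} v_k` for every `j`. -/
theorem lp3_prefix_volume_bound
    (N : ℕ) (m : ℝ) (hm : 0 < m)
    (v : ℕ → ℝ) (hv : ∀ j, 1 ≤ j → j ≤ N → 0 ≤ v j)
    (Ctil : ℕ → ℝ)
    (hmono : ∀ j j', 1 ≤ j → j ≤ j' → j' ≤ N → Ctil j ≤ Ctil j')
    (δ : ℕ → ℕ → ℝ)
    (hδnn : ∀ j j', 0 ≤ δ j j')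
    (hδsum : ∀ j j', 1 ≤ j → j ≤ N → 1 ≤ j' → j' ≤ N → j ≠ j' → δ j j' + δ j' j = 1)
    (hcon : ∀ j, 1 ≤ j → j ≤ N →
      v j + ∑ j' ∈ (Finset.Icc 1 N).erase j, v j' * δ j' j ≤ m * Ctil j) :
    ∀ j, 1 ≤ j → j ≤ N → (1 / 2) * ∑ k ∈ Finset.Icc 1 j, v k ≤ m * Ctil j := by
  intro j hj1 hjN
  set A : Finset ℕ := Finset.Icc 1 j with hA
  set S : ℝ := ∑ k ∈ A, v k with hS
  have hmem : ∀ k ∈ A, 1 ≤ k ∧ k ≤ N := by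
    intro k hk
    rw [hA, Finset.mem_Icc] at hk
    exact ⟨hk.1, hk.2.trans hjN⟩
  have hvA : ∀ k ∈ A, 0 ≤ v k := fun k hk => hv k (hmem k hk).1 (hmem k hk).2
  have hS0 : 0 ≤ S := Finset.sum_nonneg hvA
  -- define the cross term
  set T : ℝ := ∑ k ∈ A, ∑ k' ∈ A.erase k, v k * (v k' * δ k' k) with hT
  -- Step: Σ v_k² + T ≤ S * (m * Ctil j)
  have h1 : ∑ k ∈ A, v k * (m * Ctil k) ≤ S * (m * Ctil j) := by
    rw [hS, Finset.sum_mul]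
    apply Finset.sum_le_sum
    intro k hk
    have hkj : k ≤ j := (Finset.mem_Icc.mp hk).2
    have := hmono k j (hmem k hk).1 hkj hjN
    exact mul_le_mul_of_nonneg_left (mul_le_mul_of_nonneg_left this hm.le) (hvA k hk)
  have h2 : (∑ k ∈ A, v k * v k) + T ≤ ∑ k ∈ A, v k * (m * Ctil k) := by
    rw [hT, ← Finset.sum_add_distrib]
    apply Finset.sum_le_sum
    intro k hk
    have hinner : ∑ k' ∈ A.erase k, v k * (v k' * δ k' k)
        ≤ v k * ∑ k' ∈ (Finset.Icc 1 N).erase k, v k' * δ k' k := by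
      rw [Finset.mul_sum]
      apply Finset.sum_le_sum_of_subset_of_nonneg
      · exact Finset.erase_subset_erase _ (Finset.Icc_subset_Icc_right hjN)
      · intro x hx _
        have hx' := Finset.mem_of_mem_erase hx
        rw [Finset.mem_Icc] at hx'
        exact mul_nonneg (hvA k hk) (mul_nonneg (hv x hx'.1 hx'.2) (hδnn x k))
    calc v k * v k + ∑ k' ∈ A.erase k, v k * (v k' * δ k' k)
        ≤ v k * v k + v k * ∑ k' ∈ (Finset.Icc 1 N).erase k, v k' * δ k' k := by linarith
      _ = v k * (v k + ∑ k' ∈ (Finset.Icc 1 N).erase k, v k' * δ k' k) := by ring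
      _ ≤ v k * (m * Ctil k) :=
          mul_le_mul_of_nonneg_left (hcon k (hmem k hk).1 (hmem k hk).2) (hvA k hk)
  -- Symmetrization: 2T = S² − Σ v_k²
  have hswap : T = ∑ k ∈ A, ∑ k' ∈ A.erase k, v k' * (v k * δ k k') := by
    rw [hT]
    refine Finset.sum_comm' ?_
    intro x y
    simp only [Finset.mem_erase]
    constructor
    · rintro ⟨hx, hy, hy'⟩; exact ⟨⟨fun h => hy (h.symm), hx⟩, hy'⟩
    · rintro ⟨⟨hx, hy⟩, hy'⟩; exact ⟨hy, fun h => hx h.symm, hy'⟩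
  have h2T : 2 * T = S * S - ∑ k ∈ A, v k * v k := by
    have e1 : 2 * T = ∑ k ∈ A, ∑ k' ∈ A.erase k,
        (v k * (v k' * δ k' k) + v k' * (v k * δ k k')) := by
      rw [two_mul]
      nth_rewrite 2 [hswap]
      rw [hT, ← Finset.sum_add_distrib]
      congr 1; ext k
      rw [← Finset.sum_add_distrib]
    have e2 : ∀ k ∈ A, ∀ k' ∈ A.erase k,
        v k * (v k' * δ k' k) + v k' * (v k * δ k k') = v k * v k' := by
      intro k hk k' hk'
      have hne : k' ≠ k := (Finset.mem_erase.mp hk').1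
      have hk'A := Finset.mem_of_mem_erase hk'
      have hd := hδsum k k' (hmem k hk).1 (hmem k hk).2 (hmem k' hk'A).1 (hmem k' hk'A).2
        (fun h => hne h.symm)
      linear_combination (v k * v k') * hd
    have e3 : ∑ k ∈ A, ∑ k' ∈ A.erase k, v k * v k' = S * S - ∑ k ∈ A, v k * v k := by
      have : ∀ k ∈ A, ∑ k' ∈ A.erase k, v k * v k' = v k * S - v k * v k := by
        intro k hk
        rw [← Finset.mul_sum, Finset.sum_erase_eq_sub hk, ← hS, mul_sub]
      rw [Finset.sum_congr rfl this, Finset.sum_sub_distrib, ← Finset.sum_mul, ← hS]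
    rw [e1, Finset.sum_congr rfl (fun k hk => Finset.sum_congr rfl (e2 k hk)), e3]
  -- combine: (1/2) S² ≤ S (m Ctil j)
  have hmain : (1 / 2) * (S * S) ≤ S * (m * Ctil j) := by
    have hq : 0 ≤ ∑ k ∈ A, v k * v k :=
      Finset.sum_nonneg fun k hk => mul_nonneg (hvA k hk) (hvA k hk)
    nlinarith [h1, h2, h2T]
  rcases eq_or_lt_of_le hS0 with hSz | hSp
  · rw [← hSz]
    have hc := hcon j hj1 hjN
    have hnn : 0 ≤ ∑ j' ∈ (Finset.Icc 1 N).erase j, v j' * δ j' j := by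
      apply Finset.sum_nonneg
      intro x hx
      have hx' := Finset.mem_of_mem_erase hx
      rw [Finset.mem_Icc] at hx'
      exact mul_nonneg (hv x hx'.1 hx'.2) (hδnn x j)
    have := hv j hj1 hjN
    linarith
  · have := mul_le_mul_of_nonneg_left hmain (le_of_lt (inv_pos.mpr hSp))
    calc (1/2) * S = S⁻¹ * ((1/2) * (S * S)) := by field_simp
      _ ≤ S⁻¹ * (S * (m * Ctil j)) := this
      _ = m * Ctil j := by field_simp
end

section
/- Let m > 0, let v_1,…,v_N ≥ 0, let C̃_1,…,C̃_N be reals, and let δ_{kk'} ≥ 0 for k ≠ k' satisfy δ_{kk'} + δ_{k'k} = 1, with the convention δ_{kk} = 0. Suppose that for every k, m·C̃_k ≥ v_k + Σ_{k'≠k} v_{k'} δ_{k'k}. Then for every j, Σ_{k=1}^{j} v_k m C̃_k ≥ (1/2) Σ_{k=1}^{j} v_k^2 + (1/2) (Σ_{k=1}^{j} v_k)^2. -/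
open Finset

/-- The key intermediate inequality (Equation (16)) in the analysis of (LP3): summing the volume
constraints weighted by `v_k` yields
`Σ_{k=1}^{j} v_k m C̃_k ≥ (1/2) Σ_{k=1}^{j} v_k² + (1/2) (Σ_{k=1}^{j} v_k)²`. -/
theorem lp3_weighted_volume_inequality
    (N : ℕ) (m : ℝ) (hm : 0 < m)
    (v : ℕ → ℝ) (hv : ∀ k, 1 ≤ k → k ≤ N → 0 ≤ v k)
    (Ctil : ℕ → ℝ)
    (δ : ℕ → ℕ → ℝ)
    (hδnn : ∀ k k', 0 ≤ δ k k')
    (hδdiag : ∀ k, δ k k = 0)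
    (hδsum : ∀ k k', 1 ≤ k → k ≤ N → 1 ≤ k' → k' ≤ N → k ≠ k' → δ k k' + δ k' k = 1)
    (hcon : ∀ k, 1 ≤ k → k ≤ N →
      v k + ∑ k' ∈ (Finset.Icc 1 N).erase k, v k' * δ k' k ≤ m * Ctil k) :
    ∀ j, 1 ≤ j → j ≤ N →
      (1 / 2) * ∑ k ∈ Finset.Icc 1 j, (v k) ^ 2
        + (1 / 2) * (∑ k ∈ Finset.Icc 1 j, v k) ^ 2
      ≤ ∑ k ∈ Finset.Icc 1 j, v k * m * Ctil k := by
  intro j hj1 hjN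
  set S : Finset ℕ := Finset.Icc 1 j with hS
  have hSsub : S ⊆ Finset.Icc 1 N := by
    intro x hx
    simp only [hS, Finset.mem_Icc] at hx ⊢
    omega
  have hmemS : ∀ k ∈ S, 1 ≤ k ∧ k ≤ N := by
    intro k hk
    have := hSsub hk
    simpa [Finset.mem_Icc] using this
  -- Step 1: per-index weighted constraint
  have key : ∀ k ∈ S,
      v k ^ 2 + ∑ k' ∈ S.erase k, v k * (v k' * δ k' k) ≤ v k * m * Ctil k := by
    intro k hk
    obtain ⟨hk1, hkN⟩ := hmemS k hk
    have hvk := hv k hk1 hkN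
    have h1 : ∑ k' ∈ S.erase k, v k' * δ k' k
        ≤ ∑ k' ∈ (Finset.Icc 1 N).erase k, v k' * δ k' k := by
      apply Finset.sum_le_sum_of_subset_of_nonneg (Finset.erase_subset_erase _ hSsub)
      intro i hi _
      have hiI := Finset.mem_of_mem_erase hi
      rw [Finset.mem_Icc] at hiI
      exact mul_nonneg (hv i hiI.1 hiI.2) (hδnn i k)
    have h2 := hcon k hk1 hkN
    have h3 : v k * (v k + ∑ k' ∈ S.erase k, v k' * δ k' k) ≤ v k * (m * Ctil k) :=
      mul_le_mul_of_nonneg_left (le_trans (by linarith) h2) hvk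
    calc v k ^ 2 + ∑ k' ∈ S.erase k, v k * (v k' * δ k' k)
        = v k * (v k + ∑ k' ∈ S.erase k, v k' * δ k' k) := by
          rw [mul_add, Finset.mul_sum]; ring
      _ ≤ v k * (m * Ctil k) := h3
      _ = v k * m * Ctil k := by ring
  have hsum : ∑ k ∈ S, v k ^ 2 + ∑ k ∈ S, ∑ k' ∈ S.erase k, v k * (v k' * δ k' k)
      ≤ ∑ k ∈ S, v k * m * Ctil k := by
    rw [← Finset.sum_add_distrib]
    exact Finset.sum_le_sum key
  -- Step 2: symmetry pairing
  have hswap : ∑ k ∈ S, ∑ k' ∈ S.erase k, v k * (v k' * δ k' k)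
      = ∑ k' ∈ S, ∑ k ∈ S.erase k', v k * (v k' * δ k' k) := by
    apply Finset.sum_comm'
    intro x y
    constructor
    · rintro ⟨hx, hy⟩
      exact ⟨Finset.mem_erase.2 ⟨(Finset.mem_erase.1 hy).1.symm ∘ Eq.symm ∘ Eq.symm, hx⟩,
        Finset.mem_of_mem_erase hy⟩
    · rintro ⟨hx, hy⟩
      exact ⟨Finset.mem_of_mem_erase hx,
        Finset.mem_erase.2 ⟨fun h => (Finset.mem_erase.1 hx).1 h.symm, hy⟩⟩
  have hpair : 2 * ∑ k ∈ S, ∑ k' ∈ S.erase k, v k * (v k' * δ k' k)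
      = ∑ k ∈ S, ∑ k' ∈ S.erase k, v k * v k' := by
    have : ∑ k ∈ S, ∑ k' ∈ S.erase k, v k * (v k' * δ k' k)
        + ∑ k ∈ S, ∑ k' ∈ S.erase k, v k' * (v k * δ k k')
        = ∑ k ∈ S, ∑ k' ∈ S.erase k, v k * v k' := by
      rw [← Finset.sum_add_distrib]
      apply Finset.sum_congr rfl
      intro k hk
      rw [← Finset.sum_add_distrib]
      apply Finset.sum_congr rfl
      intro k' hk'
      obtain ⟨hk1, hkN⟩ := hmemS k hk
      obtain ⟨hne, hk'S⟩ := Finset.mem_erase.1 hk'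
      obtain ⟨hk'1, hk'N⟩ := hmemS k' hk'S
      have hd := hδsum k k' hk1 hkN hk'1 hk'N (fun h => hne h.symm)
      linear_combination v k * v k' * hd
    rw [hswap] at this ⊢
    have heq : ∑ k' ∈ S, ∑ k ∈ S.erase k', v k * (v k' * δ k' k)
        = ∑ k ∈ S, ∑ k' ∈ S.erase k, v k' * (v k * δ k k') := rfl
    linarith [this]
  -- Step 3: off-diagonal sum equals (Σv)² − Σv²
  have hoff : ∑ k ∈ S, ∑ k' ∈ S.erase k, v k * v k'
      = (∑ k ∈ S, v k) ^ 2 - ∑ k ∈ S, v k ^ 2 := by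
    have : ∀ k ∈ S, ∑ k' ∈ S.erase k, v k * v k'
        = v k * (∑ k' ∈ S, v k') - v k ^ 2 := by
      intro k hk
      rw [← Finset.mul_sum, Finset.sum_erase_eq_sub hk]
      ring
    rw [Finset.sum_congr rfl this, Finset.sum_sub_distrib, ← Finset.sum_mul]
    ring
  linarith [hsum, hpair, hoff]
end

section
/- Consider instances in which each job j has at most one task per machine, located on machines i ∈ M_j, with size a_{ij} ≤ m_i, processing time p_{ij} > 0, and volume v_{ij} = a_{ij} p_{ij}. For every valid preemptive schedule with job completion times C_j, there exist δ_{jj'} ∈ {0,1} (j ≠ j') with δ_{jj'} + δ_{j'j} = 1 such that for every job j and every machine i ∈ M_j: m_i C_j ≥ v_{ij} + Σ_{j'≠j} v_{ij'} δ_{j'j} and C_j ≥ p_{ij}. Consequently the optimal value of (LP3) is at most OPT, the minimum of Σ_j w_j C_j over valid schedules. -/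
open Finset MeasureTheory
open scoped Classical

/-- (LP3) lower-bounds the optimum: for every valid preemptive schedule (single-machine
placement: job `j` has one task on each machine `i ∈ M_j`, processed on that machine) there
exist 0-1 linear-ordering variables `δ` such that the completion times `C_j` together with `δ`
satisfy all (LP3) constraints. -/
theorem lp3_lower_bounds_opt
    (M N : ℕ)
    (cap : Fin M → ℝ) (hcap : ∀ i, 0 < cap i)
    (w : Fin N → ℝ) (hw : ∀ j, 0 < w j)
    (Mset : Fin N → Finset (Fin M))
    (a p : Fin N → Fin M → ℝ)
    (ha : ∀ j, ∀ i ∈ Mset j, 0 < a j i ∧ a j i ≤ cap i)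
    (hp : ∀ j, ∀ i ∈ Mset j, 0 < p j i)
    -- a valid preemptive schedule: X j i t = 1 iff job j's task on machine i runs at time t
    (X : Fin N → Fin M → ℝ → ℝ)
    (hX01 : ∀ j i t, X j i t = 0 ∨ X j i t = 1)
    (hXint : ∀ j i, MeasureTheory.Integrable (X j i))
    (hXpos : ∀ j i t, t ≤ 0 → X j i t = 0)
    (hXplace : ∀ j i t, i ∉ Mset j → X j i t = 0)
    (hpack : ∀ i, ∀ t : ℝ, ∑ j, a j i * X j i t ≤ cap i)
    (hproc : ∀ j, ∀ i ∈ Mset j, ∫ t, X j i t = p j i)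
    -- job completion times
    (C : Fin N → ℝ)
    (hCdone : ∀ j i t, C j < t → X j i t = 0) :
    ∃ δ : Fin N → Fin N → ℝ,
      (∀ j j', δ j j' = 0 ∨ δ j j' = 1) ∧
      (∀ j j', j ≠ j' → δ j j' + δ j' j = 1) ∧
      (∀ j, ∀ i ∈ Mset j,
        a j i * p j i + ∑ j' ∈ Finset.univ.filter (fun j' => j' ≠ j ∧ i ∈ Mset j'),
          a j' i * p j' i * δ j' j ≤ cap i * C j) ∧
      (∀ j, ∀ i ∈ Mset j, p j i ≤ C j) := by
  classical
  set δ : Fin N → Fin N → ℝ := fun x y =>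
    if C x < C y ∨ (C x = C y ∧ x < y) then 1 else 0 with hδ
  have hX0 : ∀ j i t, 0 ≤ X j i t := fun j i t => by
    rcases hX01 j i t with h | h <;> simp [h]
  have hδ01 : ∀ x y, δ x y = 0 ∨ δ x y = 1 := by
    intro x y; simp only [hδ]; split_ifs <;> simp
  have hδone : ∀ x y, δ x y = 1 → C x ≤ C y := by
    intro x y h
    by_cases hc : C x < C y ∨ (C x = C y ∧ x < y)
    · rcases hc with hc | hc
      · exact le_of_lt hc
      · exact le_of_eq hc.1
    · simp [hδ, hc] at h
  have hδsum : ∀ x y, x ≠ y → δ x y + δ y x = 1 := by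
    intro x y hne
    simp only [hδ]
    rcases lt_trichotomy (C x) (C y) with h | h | h
    · rw [if_pos (Or.inl h), if_neg]; · ring
      rintro (h' | h')
      · exact absurd h' (not_lt.mpr (le_of_lt h))
      · exact absurd h'.1 (ne_of_gt h)
    · rcases hne.lt_or_gt with hxy | hxy
      · rw [if_pos (Or.inr ⟨h, hxy⟩), if_neg]; · ring
        rintro (h' | h')
        · exact absurd h' (not_lt.mpr (le_of_eq h))
        · exact absurd h'.2 (not_lt.mpr (le_of_lt hxy))
      · rw [if_neg, if_pos (Or.inr ⟨h.symm, hxy⟩)]; · ring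
        rintro (h' | h')
        · exact absurd h' (not_lt.mpr (le_of_eq h.symm))
        · exact absurd h'.2 (not_lt.mpr (le_of_lt hxy))
    · rw [if_neg, if_pos (Or.inl h)]; · ring
      rintro (h' | h')
      · exact absurd h' (not_lt.mpr (le_of_lt h))
      · exact absurd h'.1 (ne_of_gt h)
  -- X vanishes outside Ioc 0 (C j)
  have hXsupp : ∀ j i t, t ∉ Set.Ioc (0:ℝ) (C j) → X j i t = 0 := by
    intro j i t ht
    rw [Set.mem_Ioc, not_and_or, not_lt, not_le] at ht
    rcases ht with ht | ht
    · exact hXpos j i t ht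
    · exact hCdone j i t ht
  -- p ≤ C
  have hpC : ∀ j, ∀ i ∈ Mset j, p j i ≤ C j := by
    intro j i hi
    have hle : ∀ t, X j i t ≤ Set.indicator (Set.Ioc (0:ℝ) (C j)) (fun _ => (1:ℝ)) t := by
      intro t
      by_cases ht : t ∈ Set.Ioc (0:ℝ) (C j)
      · rcases hX01 j i t with h | h <;> simp [h, Set.indicator_of_mem ht]
      · simp [hXsupp j i t ht, Set.indicator_of_notMem ht]
    have hind : Integrable (Set.indicator (Set.Ioc (0:ℝ) (C j)) (fun _ => (1:ℝ))) := by
      refine IntegrableOn.integrable_indicator ?_ measurableSet_Ioc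
      exact (integrableOn_const_iff).mpr (Or.inr (by rw [Real.volume_Ioc]; exact ENNReal.ofReal_lt_top))
    have hmono := integral_mono (hXint j i) hind hle
    rw [hproc j i hi, integral_indicator_const (1:ℝ) measurableSet_Ioc,
      measureReal_def, Real.volume_Ioc, smul_eq_mul, mul_one] at hmono
    by_cases hC0 : 0 ≤ C j
    · rwa [ENNReal.toReal_ofReal (by linarith), sub_zero] at hmono
    · exfalso
      rw [ENNReal.ofReal_eq_zero.mpr (by linarith)] at hmono
      simp at hmono
      exact absurd (lt_of_lt_of_le (hp j i hi) hmono) (lt_irrefl 0)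
  refine ⟨δ, hδ01, hδsum, ?_, hpC⟩
  intro j i hi
  set T := C j with hT
  have hT0 : 0 < T := lt_of_lt_of_le (hp j i hi) (hpC j i hi)
  set I : Fin N → ℝ := fun j' => ∫ t in Set.Ioc (0:ℝ) T, X j' i t with hI
  have hInonneg : ∀ j', 0 ≤ I j' :=
    fun j' => setIntegral_nonneg measurableSet_Ioc (fun t _ => hX0 j' i t)
  have hIfull : ∀ j', C j' ≤ T → i ∈ Mset j' → I j' = p j' i := by
    intro j' hle hij'
    have heq : (∫ t in Set.Ioc (0:ℝ) T, X j' i t) = ∫ t, X j' i t :=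
      setIntegral_eq_integral_of_forall_compl_eq_zero (fun t ht =>
        hXsupp j' i t (fun hmem => ht ⟨hmem.1, hmem.2.trans hle⟩))
    show (∫ t in Set.Ioc (0:ℝ) T, X j' i t) = p j' i
    rw [heq, hproc j' i hij']
  -- sum bound via packing
  have hsum : ∑ j', a j' i * I j' ≤ cap i * T := by
    have h1 : ∑ j', a j' i * I j'
        = ∫ t in Set.Ioc (0:ℝ) T, ∑ j', a j' i * X j' i t := by
      rw [integral_finset_sum _ (fun j' _ => ((hXint j' i).const_mul (a j' i)).integrableOn)]
      refine Finset.sum_congr rfl fun j' _ => ?_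
      show a j' i * (∫ t in Set.Ioc (0:ℝ) T, X j' i t) = _
      rw [← integral_const_mul]
    rw [h1]
    have h2 : ∫ t in Set.Ioc (0:ℝ) T, ∑ j', a j' i * X j' i t
        ≤ ∫ _t in Set.Ioc (0:ℝ) T, cap i := by
      apply setIntegral_mono_on
      · exact integrable_finset_sum _ (fun j' _ => ((hXint j' i).const_mul (a j' i)).integrableOn)
      · exact (integrableOn_const_iff).mpr (Or.inr (by rw [Real.volume_Ioc]; exact ENNReal.ofReal_lt_top))
      · exact measurableSet_Ioc
      · exact fun t _ => hpack i t
    refine h2.trans_eq ?_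
    rw [setIntegral_const, measureReal_def, Real.volume_Ioc, ENNReal.toReal_ofReal (by linarith),
      sub_zero, smul_eq_mul, mul_comm]
  refine le_trans ?_ hsum
  have hIj : I j = p j i := hIfull j le_rfl hi
  rw [← Finset.add_sum_erase _ (fun j' => a j' i * I j') (Finset.mem_univ j), hIj]
  apply add_le_add le_rfl
  calc ∑ j' ∈ Finset.univ.filter (fun j' => j' ≠ j ∧ i ∈ Mset j'),
        a j' i * p j' i * δ j' j
      ≤ ∑ j' ∈ Finset.univ.filter (fun j' => j' ≠ j ∧ i ∈ Mset j'), a j' i * I j' := by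
        apply Finset.sum_le_sum
        intro j' hj'
        rw [Finset.mem_filter] at hj'
        rcases hδ01 j' j with h0 | h1
        · rw [h0, mul_zero]
          exact mul_nonneg (le_of_lt (ha j' i hj'.2.2).1) (hInonneg j')
        · rw [h1, mul_one, hIfull j' (hδone j' j h1) hj'.2.2]
    _ ≤ ∑ j' ∈ Finset.univ.erase j, a j' i * I j' := by
        apply Finset.sum_le_sum_of_subset_of_nonneg
        · intro j' hj'
          rw [Finset.mem_filter] at hj'
          exact Finset.mem_erase.mpr ⟨hj'.2.1, Finset.mem_univ j'⟩
        · intro j' hj' hnot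
          by_cases hij' : i ∈ Mset j'
          · exact mul_nonneg (le_of_lt (ha j' i hij').1) (hInonneg j')
          · have : I j' = 0 := by
              rw [hI]
              simp only
              rw [setIntegral_eq_zero_of_forall_eq_zero (fun t _ => hXplace j' i t hij')]
            rw [this, mul_zero]
end
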